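/- arXiv:1903.11938 — 10 statements merged into one kernel-verified Lean document; each statement's English description precedes it below -/
import Mathlib

section
/- Let μ be a Borel measure on ℝ (with the Euclidean metric) such that 0 < μ(B) < ∞ for every open ball (bounded open interval) B. Then the non-centered Hardy–Littlewood maximal operator M associated with (ℝ, d_e, μ) possesses the dichotomy property: for every f ∈ L¹_loc(μ), if Mf(x₀) < ∞ for some x₀ ∈ ℝ, then Mf(x) < ∞ for μ-almost every x ∈ ℝ. -/
open MeasureTheory Metric Filter Set ENNReal

/-- The centered Hardy–Littlewood maximal function of `f` at `x`,
with respect to the measure `μ`. -/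
noncomputable def centeredMaximal {X : Type*} [MeasurableSpace X] [PseudoMetricSpace X]
    (μ : Measure X) (f : X → ℝ) (x : X) : ℝ≥0∞ :=
  ⨆ (r : ℝ) (_ : 0 < r),
    (∫⁻ y in Metric.ball x r, ENNReal.ofReal |f y| ∂μ) / μ (Metric.ball x r)

/-- The non-centered Hardy–Littlewood maximal function of `f` at `x`:
the supremum is taken over all open balls containing `x`. -/
noncomputable def noncenteredMaximal {X : Type*} [MeasurableSpace X] [PseudoMetricSpace X]
    (μ : Measure X) (f : X → ℝ) (x : X) : ℝ≥0∞ :=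
  ⨆ (c : X) (r : ℝ) (_ : 0 < r) (_ : x ∈ Metric.ball c r),
    (∫⁻ y in Metric.ball c r, ENNReal.ofReal |f y| ∂μ) / μ (Metric.ball c r)

/-- `f ∈ L¹_loc(μ)`: `∫_B |f| dμ < ∞` for every open ball `B`. -/
def LocallyIntegrableBall {X : Type*} [MeasurableSpace X] [PseudoMetricSpace X]
    (μ : Measure X) (f : X → ℝ) : Prop :=
  ∀ (c : X) (r : ℝ), 0 < r → (∫⁻ y in Metric.ball c r, ENNReal.ofReal |f y| ∂μ) < ⊤

private lemma ioo_sub_union {a₁ b₁ a₂ b₂ a₃ b₃ y : ℝ}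
    (hy₂ : y ∈ Ioo a₂ b₂) (hy₃ : y ∈ Ioo a₃ b₃) (ha : a₂ ≤ a₁) (hb : b₁ ≤ b₃) :
    Ioo a₁ b₁ ⊆ Ioo a₂ b₂ ∪ Ioo a₃ b₃ := by
  intro z hz
  rcases le_total z y with h | h
  · exact Or.inl ⟨lt_of_le_of_lt ha hz.1, lt_of_le_of_lt h hy₂.2⟩
  · exact Or.inr ⟨lt_of_lt_of_le hy₃.1 h, lt_of_lt_of_le hz.2 hb⟩

private lemma ioo_sub_union' {a₁ b₁ a₂ b₂ a₃ b₃ y : ℝ}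
    (hy₂ : y ∈ Ioo a₂ b₂) (hy₃ : y ∈ Ioo a₃ b₃) (ha : a₃ ≤ a₁) (hb : b₁ ≤ b₂) :
    Ioo a₁ b₁ ⊆ Ioo a₂ b₂ ∪ Ioo a₃ b₃ :=
  fun _ hz => ((ioo_sub_union hy₃ hy₂ ha hb) hz).symm

private lemma three_intervals {a₁ b₁ a₂ b₂ a₃ b₃ y : ℝ}
    (h₁ : y ∈ Ioo a₁ b₁) (h₂ : y ∈ Ioo a₂ b₂) (h₃ : y ∈ Ioo a₃ b₃) :
    Ioo a₁ b₁ ⊆ Ioo a₂ b₂ ∪ Ioo a₃ b₃ ∨ Ioo a₂ b₂ ⊆ Ioo a₁ b₁ ∪ Ioo a₃ b₃ ∨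
      Ioo a₃ b₃ ⊆ Ioo a₁ b₁ ∪ Ioo a₂ b₂ := by
  rcases le_total a₁ a₂ with h12 | h21 <;> rcases le_total a₁ a₃ with h13 | h31 <;>
    rcases le_total a₂ a₃ with h23 | h32 <;>
    rcases le_total b₁ b₂ with g12 | g21 <;> rcases le_total b₁ b₃ with g13 | g31 <;>
    rcases le_total b₂ b₃ with g23 | g32 <;>
    first
      | exact Or.inl (ioo_sub_union h₂ h₃ (by linarith) (by linarith))
      | exact Or.inl (ioo_sub_union' h₂ h₃ (by linarith) (by linarith))
      | exact Or.inr (Or.inl (ioo_sub_union h₁ h₃ (by linarith) (by linarith)))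
      | exact Or.inr (Or.inl (ioo_sub_union' h₁ h₃ (by linarith) (by linarith)))
      | exact Or.inr (Or.inr (ioo_sub_union h₁ h₂ (by linarith) (by linarith)))
      | exact Or.inr (Or.inr (ioo_sub_union' h₁ h₂ (by linarith) (by linarith)))

private lemma three_balls {B₁ B₂ B₃ : Set ℝ} {y : ℝ}
    (hb : ∀ B ∈ ({B₁, B₂, B₃} : Set (Set ℝ)), ∃ c r : ℝ, 0 < r ∧ B = ball c r)
    (h₁ : y ∈ B₁) (h₂ : y ∈ B₂) (h₃ : y ∈ B₃) :
    B₁ ⊆ B₂ ∪ B₃ ∨ B₂ ⊆ B₁ ∪ B₃ ∨ B₃ ⊆ B₁ ∪ B₂ := by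
  obtain ⟨c₁, r₁, -, rfl⟩ := hb B₁ (by simp)
  obtain ⟨c₂, r₂, -, rfl⟩ := hb B₂ (by simp)
  obtain ⟨c₃, r₃, -, rfl⟩ := hb B₃ (by simp)
  rw [Real.ball_eq_Ioo] at h₁ h₂ h₃ ⊢
  rw [Real.ball_eq_Ioo (x := c₂), Real.ball_eq_Ioo (x := c₃)]
  exact three_intervals h₁ h₂ h₃

open scoped Classical in
private lemma mult_two_sum (ν : Measure ℝ) (T : Finset (Set ℝ))
    (hmeas : ∀ B ∈ T, MeasurableSet B)
    (hmult : ∀ y : ℝ, (T.filter (fun B => y ∈ B)).card ≤ 2) :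
    ∑ B ∈ T, ν B ≤ 2 * ν univ := by
  have h1 : ∀ B ∈ T, ν B = ∫⁻ y, B.indicator (1 : ℝ → ℝ≥0∞) y ∂ν := by
    intro B hB
    rw [lintegral_indicator_one (hmeas B hB)]
  calc ∑ B ∈ T, ν B = ∑ B ∈ T, ∫⁻ y, B.indicator (1 : ℝ → ℝ≥0∞) y ∂ν :=
        Finset.sum_congr rfl h1
    _ = ∫⁻ y, ∑ B ∈ T, B.indicator (1 : ℝ → ℝ≥0∞) y ∂ν := by
        rw [lintegral_finset_sum]
        intro B hB
        exact measurable_const.indicator (hmeas B hB)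
    _ ≤ ∫⁻ _, (2 : ℝ≥0∞) ∂ν := by
        apply lintegral_mono
        intro y
        have h2 : ∑ B ∈ T, B.indicator (1 : ℝ → ℝ≥0∞) y
            = ((T.filter (fun B => y ∈ B)).card : ℝ≥0∞) := by
          simp [Set.indicator_apply]
        simp only [h2]
        exact_mod_cast Nat.cast_le.mpr (hmult y)
    _ = 2 * ν univ := by rw [lintegral_const]

private lemma compact_bound (μ ν : Measure ℝ) (N : ℝ≥0∞) {K : Set ℝ} (hK : IsCompact K)
    (hcov : ∀ x ∈ K, ∃ c r : ℝ, 0 < r ∧ x ∈ ball c r ∧ N * μ (ball c r) < ν (ball c r)) :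
    N * μ K ≤ 2 * ν univ := by
  classical
  let ι := {p : ℝ × ℝ // 0 < p.2 ∧ N * μ (ball p.1 p.2) < ν (ball p.1 p.2)}
  have hKcov : K ⊆ ⋃ i : ι, ball i.1.1 i.1.2 := by
    intro x hx
    obtain ⟨c, r, hr, hxb, hlt⟩ := hcov x hx
    exact mem_iUnion.2 ⟨⟨(c, r), hr, hlt⟩, hxb⟩
  obtain ⟨t, ht⟩ := hK.elim_finite_subcover (fun i : ι => ball i.1.1 i.1.2)
    (fun i => isOpen_ball) hKcov
  set S : Finset (Set ℝ) := t.image (fun i => ball i.1.1 i.1.2) with hS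
  have hSprop : ∀ B ∈ S, (∃ c r : ℝ, 0 < r ∧ B = ball c r) ∧ N * μ B < ν B := by
    intro B hB
    obtain ⟨i, _, rfl⟩ := Finset.mem_image.1 hB
    exact ⟨⟨i.1.1, i.1.2, i.2.1, rfl⟩, i.2.2⟩
  have hScov : K ⊆ ⋃₀ ↑S := by
    intro x hx
    have hx' := ht hx
    simp only [mem_iUnion, exists_prop] at hx'
    obtain ⟨i, hi, hxi⟩ := hx'
    exact ⟨ball i.1.1 i.1.2, Finset.mem_coe.2 (Finset.mem_image_of_mem _ hi), hxi⟩
  have hPne : (S.powerset.filter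
      (fun T : Finset (Set ℝ) => K ⊆ ⋃₀ (T : Set (Set ℝ)))).Nonempty :=
    ⟨S, Finset.mem_filter.2 ⟨Finset.mem_powerset_self S, hScov⟩⟩
  obtain ⟨T, hTmem, hTmin⟩ :=
    Finset.exists_min_image (S.powerset.filter
      (fun T : Finset (Set ℝ) => K ⊆ ⋃₀ (T : Set (Set ℝ)))) Finset.card hPne
  have hTsub : T ⊆ S := Finset.mem_powerset.1 (Finset.mem_filter.1 hTmem).1
  have hTcov : K ⊆ ⋃₀ ↑T := (Finset.mem_filter.1 hTmem).2
  have hmult : ∀ y : ℝ, (T.filter (fun B => y ∈ B)).card ≤ 2 := by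
    intro y
    by_contra hcard
    push_neg at hcard
    obtain ⟨U3, hU3sub, hU3card⟩ := Finset.exists_subset_card_eq hcard
    obtain ⟨B₁, B₂, B₃, h12, h13, h23, rfl⟩ := Finset.card_eq_three.1 hU3card
    have m1 := hU3sub (by simp : B₁ ∈ ({B₁, B₂, B₃} : Finset (Set ℝ)))
    have m2 := hU3sub (by simp : B₂ ∈ ({B₁, B₂, B₃} : Finset (Set ℝ)))
    have m3 := hU3sub (by simp : B₃ ∈ ({B₁, B₂, B₃} : Finset (Set ℝ)))
    rw [Finset.mem_filter] at m1 m2 m3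
    have hballs : ∀ B ∈ ({B₁, B₂, B₃} : Set (Set ℝ)), ∃ c r : ℝ, 0 < r ∧ B = ball c r := by
      intro B hB
      rcases hB with rfl | rfl | rfl
      · exact (hSprop _ (hTsub m1.1)).1
      · exact (hSprop _ (hTsub m2.1)).1
      · exact (hSprop _ (hTsub m3.1)).1
    have herase : ∀ B B' B'' : Set ℝ, B ∈ T → B' ∈ T → B'' ∈ T → B ≠ B' → B ≠ B'' →
        B ⊆ B' ∪ B'' → False := by
      intro B B' B'' hB hB' hB'' hne' hne'' hsub
      have hT'cov : K ⊆ ⋃₀ ↑(T.erase B) := by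
        intro x hx
        obtain ⟨B₀, hB₀, hxB₀⟩ := hTcov hx
        rcases eq_or_ne B₀ B with rfl | hne
        · rcases hsub hxB₀ with h | h
          · exact ⟨B', Finset.mem_coe.2 (Finset.mem_erase.2 ⟨hne'.symm, hB'⟩), h⟩
          · exact ⟨B'', Finset.mem_coe.2 (Finset.mem_erase.2 ⟨hne''.symm, hB''⟩), h⟩
        · exact ⟨B₀, Finset.mem_coe.2 (Finset.mem_erase.2 ⟨hne, Finset.mem_coe.1 hB₀⟩), hxB₀⟩
      have hmem' : T.erase B ∈ S.powerset.filter
          (fun T : Finset (Set ℝ) => K ⊆ ⋃₀ (T : Set (Set ℝ))) :=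
        Finset.mem_filter.2 ⟨Finset.mem_powerset.2 ((Finset.erase_subset _ _).trans hTsub),
          hT'cov⟩
      have := hTmin _ hmem'
      have hlt := Finset.card_erase_lt_of_mem hB
      omega
    rcases three_balls hballs m1.2 m2.2 m3.2 with h | h | h
    · exact herase B₁ B₂ B₃ m1.1 m2.1 m3.1 h12 h13 h
    · exact herase B₂ B₁ B₃ m2.1 m1.1 m3.1 (Ne.symm h12) h23 h
    · exact herase B₃ B₁ B₂ m3.1 m1.1 m2.1 (Ne.symm h13) (Ne.symm h23) h
  have hmeasT : ∀ B ∈ T, MeasurableSet B := by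
    intro B hB
    obtain ⟨c, r, -, rfl⟩ := (hSprop B (hTsub hB)).1
    exact measurableSet_ball
  calc N * μ K ≤ N * μ (⋃₀ ↑T) := mul_le_mul_right (measure_mono hTcov) N
    _ ≤ N * ∑ B ∈ T, μ B := by
        apply mul_le_mul_right
        rw [sUnion_eq_biUnion]
        exact measure_biUnion_finset_le T id
    _ = ∑ B ∈ T, N * μ B := Finset.mul_sum _ _ _
    _ ≤ ∑ B ∈ T, ν B := Finset.sum_le_sum (fun B hB => (hSprop B (hTsub hB)).2.le)
    _ ≤ 2 * ν univ := mult_two_sum ν T hmeasT hmult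

private lemma weak_bound (μ ν : Measure ℝ) (N : ℝ≥0∞) (hN0 : N ≠ 0) (hNtop : N ≠ ⊤)
    (hμfin : ∀ c r : ℝ, 0 < r → μ (ball c r) < ⊤) (E : Set ℝ)
    (hE : ∀ x ∈ E, ∃ c r : ℝ, 0 < r ∧ x ∈ ball c r ∧ N * μ (ball c r) < ν (ball c r)) :
    μ E ≤ 2 * ν univ / N := by
  haveI : IsLocallyFiniteMeasure μ :=
    ⟨fun x => ⟨ball x 1, ball_mem_nhds x one_pos, hμfin x 1 one_pos⟩⟩
  set U : Set ℝ := ⋃ (p : {p : ℝ × ℝ // 0 < p.2 ∧ N * μ (ball p.1 p.2) < ν (ball p.1 p.2)}),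
    ball p.1.1 p.1.2 with hU
  have hUopen : IsOpen U := isOpen_iUnion (fun p => isOpen_ball)
  have hEU : E ⊆ U := by
    intro x hx
    obtain ⟨c, r, hr, hxb, hlt⟩ := hE x hx
    exact mem_iUnion.2 ⟨⟨(c, r), hr, hlt⟩, hxb⟩
  have hU2 : μ U ≤ 2 * ν univ / N := by
    rw [hUopen.measure_eq_iSup_isCompact]
    refine iSup_le fun K => iSup_le fun hKU => iSup_le fun hKc => ?_
    have hcov : ∀ x ∈ K, ∃ c r : ℝ, 0 < r ∧ x ∈ ball c r ∧
        N * μ (ball c r) < ν (ball c r) := by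
      intro x hx
      obtain ⟨p, hp⟩ := mem_iUnion.1 (hKU hx)
      exact ⟨p.1.1, p.1.2, p.2.1, hp, p.2.2⟩
    rw [ENNReal.le_div_iff_mul_le (Or.inl hN0) (Or.inl hNtop), mul_comm]
    exact compact_bound μ ν N hKc hcov
  exact (measure_mono hEU).trans hU2

/-- For any Borel measure `μ` on `ℝ` assigning positive finite measure to
every open ball, the non-centered Hardy–Littlewood maximal operator possesses the
dichotomy property: if `Mf(x₀) < ∞` for some `x₀`, then `Mf < ∞` μ-a.e. -/
theorem dichotomy_noncentered_real (μ : Measure ℝ)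
    (hμ : ∀ (c r : ℝ), 0 < r → 0 < μ (Metric.ball c r) ∧ μ (Metric.ball c r) < ⊤)
    (f : ℝ → ℝ) (hf : LocallyIntegrableBall μ f)
    (x₀ : ℝ) (hx₀ : noncenteredMaximal μ f x₀ < ⊤) :
    ∀ᵐ x ∂μ, noncenteredMaximal μ f x < ⊤ := by
  rw [ae_iff]
  set Bad := {x : ℝ | ¬ noncenteredMaximal μ f x < ⊤} with hBadDef
  have hzero : ∀ n : ℕ, μ (Bad ∩ ball x₀ ((n : ℝ) + 1)) = 0 := by
    intro n
    set R : ℝ := (n : ℝ) + 1 with hRdef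
    have hR1 : (1 : ℝ) ≤ R := by
      rw [hRdef]
      have : (0 : ℝ) ≤ (n : ℝ) := Nat.cast_nonneg n
      linarith
    have hR0 : (0 : ℝ) < R := by linarith
    set K₀ := noncenteredMaximal μ f x₀ with hK₀def
    have hK₀top : K₀ ≠ ⊤ := hx₀.ne
    set A := μ (ball x₀ (2 * R)) with hAdef
    have hAtop : A ≠ ⊤ := ((hμ x₀ (2 * R) (by linarith)).2).ne
    -- the two "side" intervals
    have hIoo1 : ball (x₀ + 2 * R) R = Ioo (x₀ + R) (x₀ + 3 * R) := by
      rw [Real.ball_eq_Ioo]; congr 1 <;> ring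
    have hIoo2 : ball (x₀ - 2 * R) R = Ioo (x₀ - 3 * R) (x₀ - R) := by
      rw [Real.ball_eq_Ioo]; congr 1 <;> ring
    set δ := min (μ (Ioo (x₀ + R) (x₀ + 3 * R))) (μ (Ioo (x₀ - 3 * R) (x₀ - R))) with hδdef
    have hδ0 : δ ≠ 0 := by
      have h1 := (hμ (x₀ + 2 * R) R hR0).1
      have h2 := (hμ (x₀ - 2 * R) R hR0).1
      rw [hIoo1] at h1
      rw [hIoo2] at h2
      exact (lt_min h1 h2).ne'
    set J := ball x₀ (3 * R) with hJdef
    set ν := (μ.restrict J).withDensity (fun y => ENNReal.ofReal |f y|) with hνdef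
    have hνs : ∀ s : Set ℝ, MeasurableSet s → s ⊆ J →
        ν s = ∫⁻ y in s, ENNReal.ofReal |f y| ∂μ := by
      intro s hs hsJ
      rw [hνdef, withDensity_apply _ hs, Measure.restrict_restrict hs,
        inter_eq_self_of_subset_left hsJ]
    have hνuniv : ν univ ≠ ⊤ := by
      rw [hνdef, withDensity_apply _ MeasurableSet.univ, Measure.restrict_univ]
      have := hf x₀ (3 * R) (by linarith)
      rw [hJdef]
      exact this.ne
    set C := K₀ + K₀ * A / δ with hCdef
    have hCtop : C ≠ ⊤ :=
      ENNReal.add_ne_top.2 ⟨hK₀top,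
        (ENNReal.div_lt_top (ENNReal.mul_ne_top hK₀top hAtop) hδ0).ne⟩
    -- Claim A
    have claimA : ∀ x ∈ ball x₀ R, ∀ c r : ℝ, 0 < r → x ∈ ball c r →
        (∫⁻ y in ball c r, ENNReal.ofReal |f y| ∂μ) / μ (ball c r) ≤ C ∨
        (∫⁻ y in ball c r, ENNReal.ofReal |f y| ∂μ) / μ (ball c r)
          = ν (ball c r) / μ (ball c r) := by
      intro x hx c r hr hxb
      by_cases hsubJ : ball c r ⊆ J
      · right
        rw [hνs _ measurableSet_ball hsubJ]
      · left
        obtain ⟨y, hyb, hyJ⟩ := not_subset.1 hsubJ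
        rw [Real.ball_eq_Ioo, mem_Ioo] at hx hxb hyb
        rw [hJdef, Real.ball_eq_Ioo, mem_Ioo, not_and_or, not_lt, not_lt] at hyJ
        -- δ ≤ μ (ball c r)
        have hδle : δ ≤ μ (ball c r) := by
          rcases hyJ with hy | hy
          · -- y ≤ x₀ - 3R : left interval inside ball c r
            refine (min_le_right _ _).trans (measure_mono ?_)
            rw [Real.ball_eq_Ioo]
            intro z hz
            exact ⟨by cases hz; cases hyb; linarith, by cases hz; cases hxb; cases hx; linarith⟩
          · -- x₀ + 3R ≤ y
            refine (min_le_left _ _).trans (measure_mono ?_)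
            rw [Real.ball_eq_Ioo]
            intro z hz
            exact ⟨by cases hz; cases hxb; cases hx; linarith, by cases hz; cases hyb; linarith⟩
        have hm0 : μ (ball c r) ≠ 0 := (hμ c r hr).1.ne'
        have hmtop : μ (ball c r) ≠ ⊤ := (hμ c r hr).2.ne
        -- enlarged interval containing x₀
        set a' := min (c - r) (x₀ - 1) with ha'
        set b' := max (c + r) (x₀ + 1) with hb'
        set c' := (a' + b') / 2 with hc'
        set r' := (b' - a') / 2 with hr'def
        have hab : a' < b' := by
          have h1 : a' ≤ x₀ - 1 := min_le_right _ _
          have h2 : x₀ + 1 ≤ b' := le_max_right _ _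
          linarith
        have hr'pos : 0 < r' := by rw [hr'def]; linarith
        have hball' : ball c' r' = Ioo a' b' := by
          rw [Real.ball_eq_Ioo]; congr 1 <;> (rw [hc', hr'def]; ring)
        have hx₀mem : x₀ ∈ ball c' r' := by
          rw [hball']
          exact ⟨lt_of_le_of_lt (min_le_right _ _) (by linarith),
            lt_of_lt_of_le (by linarith) (le_max_right _ _)⟩
        have hsub1 : ball c r ⊆ ball c' r' := by
          rw [hball', Real.ball_eq_Ioo]
          exact Ioo_subset_Ioo (min_le_left _ _) (le_max_left _ _)
        have hKbound : (∫⁻ y in ball c' r', ENNReal.ofReal |f y| ∂μ) / μ (ball c' r')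
            ≤ K₀ := by
          rw [hK₀def, noncenteredMaximal]
          refine le_iSup_of_le c' ?_
          refine le_iSup_of_le r' ?_
          refine le_iSup_of_le hr'pos ?_
          exact le_iSup_of_le hx₀mem le_rfl
        have hμ'0 : μ (ball c' r') ≠ 0 := (hμ c' r' hr'pos).1.ne'
        have hμ'top : μ (ball c' r') ≠ ⊤ := (hμ c' r' hr'pos).2.ne
        have hint : (∫⁻ y in ball c' r', ENNReal.ofReal |f y| ∂μ)
            ≤ K₀ * μ (ball c' r') :=
          (ENNReal.div_le_iff_le_mul (Or.inl hμ'0) (Or.inl hμ'top)).1 hKbound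
        have hsub2 : ball c' r' ⊆ ball c r ∪ ball x₀ (2 * R) := by
          rw [hball', Real.ball_eq_Ioo, Real.ball_eq_Ioo]
          intro z hz
          rw [mem_Ioo] at hz
          by_cases hzb : z ∈ Ioo (c - r) (c + r)
          · exact Or.inl hzb
          · right
            rw [mem_Ioo, not_and_or, not_lt, not_lt] at hzb
            rcases hzb with hz1 | hz2
            · -- z ≤ c - r, so a' = x₀ - 1 side
              have haz : a' < z := hz.1
              have ha'x : a' = x₀ - 1 := by
                rcases min_cases (c - r) (x₀ - 1) with ⟨h, _⟩ | ⟨h, _⟩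
                · exfalso; rw [ha'] at haz; linarith [haz.trans_le hz1]
                · rw [ha', h]
              rw [ha'x] at haz
              cases hxb; cases hx
              constructor <;> linarith
            · -- c + r ≤ z
              have hzb' : z < b' := hz.2
              have hb'x : b' = x₀ + 1 := by
                rcases max_cases (c + r) (x₀ + 1) with ⟨h, _⟩ | ⟨h, _⟩
                · exfalso; rw [hb'] at hzb'; linarith
                · rw [hb', h]
              rw [hb'x] at hzb'
              cases hxb; cases hx
              constructor <;> linarith
        have hμ'le : μ (ball c' r') ≤ μ (ball c r) + A :=
          (measure_mono hsub2).trans (measure_union_le _ _)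
        have h1 : (∫⁻ y in ball c r, ENNReal.ofReal |f y| ∂μ)
            ≤ K₀ * (μ (ball c r) + A) :=
          ((lintegral_mono_set hsub1).trans hint).trans (mul_le_mul_right hμ'le K₀)
        calc (∫⁻ y in ball c r, ENNReal.ofReal |f y| ∂μ) / μ (ball c r)
            ≤ (K₀ * (μ (ball c r) + A)) / μ (ball c r) :=
              ENNReal.div_le_div_right h1 _
          _ = (K₀ * μ (ball c r)) / μ (ball c r) + (K₀ * A) / μ (ball c r) := by
              rw [mul_add, ENNReal.add_div]
          _ ≤ K₀ + K₀ * A / δ := by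
              refine add_le_add ?_ (ENNReal.div_le_div_left hδle _)
              rw [mul_div_assoc, ENNReal.div_self hm0 hmtop, mul_one]
          _ = C := hCdef.symm
    -- From a point of Bad inside the ball, produce a heavy ball for ν
    have hBadsub : ∀ N : ℝ≥0∞, C < N → N ≠ ⊤ → ∀ x ∈ Bad ∩ ball x₀ R,
        ∃ c r : ℝ, 0 < r ∧ x ∈ ball c r ∧ N * μ (ball c r) < ν (ball c r) := by
      intro N hCN hNtop x hx
      obtain ⟨hxBad, hxball⟩ := hx
      have htop : noncenteredMaximal μ f x = ⊤ := by
        have := hxBad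
        rw [hBadDef, mem_setOf_eq, not_lt, top_le_iff] at this
        exact this
      have hlt : N < noncenteredMaximal μ f x := by
        rw [htop]
        exact hNtop.lt_top
      rw [noncenteredMaximal] at hlt
      simp only [lt_iSup_iff] at hlt
      obtain ⟨c, r, hr, hxb, hlt⟩ := hlt
      refine ⟨c, r, hr, hxb, ?_⟩
      rcases claimA x hxball c r hr hxb with h | h
      · exact absurd (hlt.trans_le h) (not_lt.2 hCN.le)
      · rw [h] at hlt
        have hm0 : μ (ball c r) ≠ 0 := (hμ c r hr).1.ne'
        have hmtop : μ (ball c r) ≠ ⊤ := (hμ c r hr).2.ne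
        exact (ENNReal.lt_div_iff_mul_lt (Or.inl hm0) (Or.inl hmtop)).1 hlt
    have hbound : ∀ N : ℝ≥0∞, C < N → N ≠ ⊤ →
        μ (Bad ∩ ball x₀ R) ≤ 2 * ν univ / N := by
      intro N h1 h2
      exact weak_bound μ ν N (pos_of_gt h1).ne' h2 (fun c r hr => (hμ c r hr).2) _
        (hBadsub N h1 h2)
    -- conclude
    by_contra hne
    have hpos : 0 < μ (Bad ∩ ball x₀ R) := zero_lt_iff.2 hne
    have hfin : μ (Bad ∩ ball x₀ R) ≠ ⊤ :=
      ((measure_mono inter_subset_right).trans_lt (hμ x₀ R hR0).2).ne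
    have h2νtop : 2 * ν univ ≠ ⊤ := ENNReal.mul_ne_top (by norm_num) hνuniv
    obtain ⟨k, hk⟩ := ENNReal.exists_nat_gt
      ((ENNReal.div_lt_top h2νtop hne).ne :
        2 * ν univ / μ (Bad ∩ ball x₀ R) ≠ ⊤)
    have hk0 : ((k : ℝ≥0∞)) ≠ 0 := (pos_of_gt hk).ne'
    have hktop : ((k : ℝ≥0∞)) ≠ ⊤ := ENNReal.natCast_ne_top k
    have h2 : 2 * ν univ < (k : ℝ≥0∞) * μ (Bad ∩ ball x₀ R) :=
      (ENNReal.div_lt_iff (Or.inl hne) (Or.inl hfin)).1 hk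
    set N : ℝ≥0∞ := C + 1 + k with hNdef
    have hCN : C < N := by
      rw [hNdef]
      calc C < C + 1 := ENNReal.lt_add_right hCtop one_ne_zero
        _ ≤ C + 1 + k := le_self_add
    have hNtop : N ≠ ⊤ := by
      rw [hNdef]
      exact ENNReal.add_ne_top.2 ⟨ENNReal.add_ne_top.2 ⟨hCtop, ENNReal.one_ne_top⟩, hktop⟩
    have hb := hbound N hCN hNtop
    have hle : 2 * ν univ / N ≤ 2 * ν univ / k := by
      refine ENNReal.div_le_div_left ?_ _
      rw [hNdef]
      exact le_add_self
    have hlt2 : 2 * ν univ / k < μ (Bad ∩ ball x₀ R) := by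
      rw [ENNReal.div_lt_iff (Or.inl hk0) (Or.inl hktop)]
      exact lt_of_lt_of_le h2 (le_of_eq (mul_comm _ _))
    exact absurd (hb.trans hle) (not_le.2 hlt2)
  -- assemble
  have hsub : Bad ⊆ ⋃ n : ℕ, Bad ∩ ball x₀ ((n : ℝ) + 1) := by
    intro x hx
    obtain ⟨n, hn⟩ := exists_nat_gt (dist x x₀)
    exact mem_iUnion.2 ⟨n, hx, by rw [mem_ball]; linarith⟩
  exact measure_mono_null hsub (measure_iUnion_null hzero)
end

section
/- Let μ be a Borel measure on ℝ (with the Euclidean metric) such that 0 < μ(B) < ∞ for every bounded open interval B, and let f ∈ L¹_loc(μ). Then for μ-almost every x ∈ ℝ one has lim_{r→0} sup_{B ∋ x, r(B)=r} (1/μ(B)) ∫_B |f(y) − f(x)| dμ(y) = 0, where the supremum is over all open balls B of radius r containing x; that is, μ(ℝ \ L_f) = 0. -/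
open MeasureTheory Metric Filter Set ENNReal

/-!
On the line, a finite family of intervals has a subfamily with the same union in which no
point lies in more than two intervals: if a point lies in three of them, the one reaching
neither furthest left nor furthest right is covered by the other two. Together with inner
regularity this gives the weak type bound `s * μ {M_U u > s} ≤ 2 ∫_U u` for the noncentered
maximal function restricted to balls inside `U`, for every locally finite `μ`, doubling or not.

For `h ≥ 0` locally integrable, Vitali–Carathéodory gives an upper semicontinuous `g ≤ h` with
`∫_U (h - g)` small. Averages of `g` over small balls through `x` are at most `g x + ε`, and
averages of `h - g` are small outside a set of small measure, so a.e. the averages of `h` over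
small balls through `x` are eventually at most `h x + ε`. Applying this to `|f - q|`, `q ∈ ℚ`,
and using `|f - f x| ≤ |f - q| + |q - f x|` proves the theorem.

`f` is not assumed measurable, so all integrals are lower integrals; the argument only uses their
superadditivity and their additivity when one summand is measurable.
-/

open scoped Topology NNReal Finset

/-- `ballAverageSup μ u x r` is `sup_{B ∋ x, r(B) = r} ⨍_B u dμ`. -/
noncomputable def ballAverageSup {X : Type*} [MeasurableSpace X] [PseudoMetricSpace X]
    (μ : Measure X) (u : X → ℝ≥0∞) (x : X) (r : ℝ) : ℝ≥0∞ :=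
  ⨆ (c : X) (_ : x ∈ ball c r), (∫⁻ y in ball c r, u y ∂μ) / μ (ball c r)

lemma eventually_forall_ball_subset_of_mem_nhds {X : Type*} [PseudoMetricSpace X] {x : X}
    {s : Set X} (hs : s ∈ 𝓝 x) :
    ∀ᶠ r in 𝓝[>] (0 : ℝ), ∀ c, x ∈ ball c r → ball c r ⊆ s := by
  obtain ⟨ε, hε, hεs⟩ := Metric.mem_nhds_iff.mp hs
  filter_upwards [Ioo_mem_nhdsGT (half_pos hε)] with r hr c hxc
  refine (ball_subset_ball' ?_).trans hεs
  rw [dist_comm]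
  linarith [mem_ball.mp hxc, hr.2]

section PseudoMetric

variable {X : Type*} [MeasurableSpace X] [PseudoMetricSpace X] {μ : Measure X}

lemma ballAverageSup_le {u : X → ℝ≥0∞} {x : X} {r : ℝ} {a : ℝ≥0∞}
    (h : ∀ c, x ∈ ball c r → ∫⁻ y in ball c r, u y ∂μ ≤ a * μ (ball c r)) :
    ballAverageSup μ u x r ≤ a :=
  iSup₂_le fun c hc => div_le_of_le_mul (h c hc)

lemma ballAverageSup_mono {u v : X → ℝ≥0∞} (huv : u ≤ v) (x : X) (r : ℝ) :
    ballAverageSup μ u x r ≤ ballAverageSup μ v x r :=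
  iSup₂_mono fun _ _ => ENNReal.div_le_div_right (lintegral_mono fun y => huv y) _

lemma ballAverageSup_add_le {u v : X → ℝ≥0∞} (hv : Measurable v) (x : X) (r : ℝ) :
    ballAverageSup μ (u + v) x r ≤ ballAverageSup μ u x r + ballAverageSup μ v x r := by
  refine iSup₂_le fun c hc => ?_
  rw [Pi.add_def, lintegral_add_right _ hv, ENNReal.add_div]
  exact add_le_add (le_iSup₂_of_le c hc le_rfl) (le_iSup₂_of_le c hc le_rfl)

lemma ballAverageSup_const_le (a : ℝ≥0∞) (x : X) (r : ℝ) :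
    ballAverageSup μ (fun _ => a) x r ≤ a :=
  ballAverageSup_le fun _ _ => (setLIntegral_const _ _).le

lemma UpperSemicontinuousAt.eventually_ballAverageSup_le {g : X → ℝ≥0∞} {x : X}
    (hg : UpperSemicontinuousAt g x) {a : ℝ≥0∞} (ha : g x < a) :
    ∀ᶠ r in 𝓝[>] (0 : ℝ), ballAverageSup μ g x r ≤ a := by
  filter_upwards [eventually_forall_ball_subset_of_mem_nhds (hg a ha)] with r hr
  refine ballAverageSup_le fun c hc => ?_
  calc ∫⁻ y in ball c r, g y ∂μ ≤ ∫⁻ _ in ball c r, a ∂μ :=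
        setLIntegral_mono measurable_const fun y hy => (hr c hc hy).le
    _ = a * μ (ball c r) := setLIntegral_const _ _

lemma ballAverageSup_ofReal_abs_sub_le (f : X → ℝ) (a b : ℝ) (x : X) (r : ℝ) :
    ballAverageSup μ (fun y => ENNReal.ofReal |f y - a|) x r
      ≤ ballAverageSup μ (fun y => ENNReal.ofReal |f y - b|) x r + ENNReal.ofReal |b - a| := by
  have htri : (fun y => ENNReal.ofReal |f y - a|)
      ≤ (fun y => ENNReal.ofReal |f y - b|) + fun _ => ENNReal.ofReal |b - a| := fun y =>
    (ENNReal.ofReal_le_ofReal (abs_sub_le _ _ _)).trans ENNReal.ofReal_add_le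
  refine (ballAverageSup_mono htri x r).trans
    ((ballAverageSup_add_le measurable_const x r).trans ?_)
  gcongr
  exact ballAverageSup_const_le _ x r

lemma LocallyIntegrableBall.sub_const [ProperSpace X] [IsLocallyFiniteMeasure μ] {f : X → ℝ}
    (hf : LocallyIntegrableBall μ f) (a : ℝ) : LocallyIntegrableBall μ fun y => f y - a := by
  intro c r hr
  calc ∫⁻ y in ball c r, ENNReal.ofReal |f y - a| ∂μ
      ≤ ∫⁻ y in ball c r, (ENNReal.ofReal |f y| + ENNReal.ofReal |a|) ∂μ :=
        lintegral_mono fun y => (ENNReal.ofReal_le_ofReal (abs_sub _ _)).trans ENNReal.ofReal_add_le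
    _ = ∫⁻ y in ball c r, ENNReal.ofReal |f y| ∂μ + ENNReal.ofReal |a| * μ (ball c r) := by
        rw [lintegral_add_right _ measurable_const, setLIntegral_const]
    _ < ⊤ :=
        ENNReal.add_lt_top.mpr ⟨hf c r hr, ENNReal.mul_lt_top ofReal_lt_top measure_ball_lt_top⟩

end PseudoMetric

lemma sum_lintegral_le_lintegral_sum {α ι : Type*} [MeasurableSpace α] (μ : Measure α)
    (t : Finset ι) (f : ι → α → ℝ≥0∞) :
    ∑ i ∈ t, ∫⁻ a, f i a ∂μ ≤ ∫⁻ a, ∑ i ∈ t, f i a ∂μ := by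
  induction t using Finset.cons_induction with
  | empty => simp
  | cons i t hi ih =>
    simp only [Finset.sum_cons]
    exact (add_le_add le_rfl ih).trans (le_lintegral_add _ _)

section Covering

open scoped Classical

lemma exists_ball_subset_biUnion_erase_of_two_lt_card {t : Finset (ℝ × ℝ)} {y : ℝ}
    (hy : 2 < #{p ∈ t | y ∈ ball p.1 p.2}) :
    ∃ m ∈ t, ball m.1 m.2 ⊆ ⋃ p ∈ t.erase m, ball p.1 p.2 := by
  set A := {p ∈ t | y ∈ ball p.1 p.2}
  have hA : A.Nonempty := Finset.card_pos.mp (by omega)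
  obtain ⟨j, hjA, hj⟩ := A.exists_min_image (fun p => p.1 - p.2) hA
  obtain ⟨k, hkA, hk⟩ := A.exists_max_image (fun p => p.1 + p.2) hA
  obtain ⟨m, hm⟩ : (A \ {j, k}).Nonempty := by
    rw [← Finset.card_pos]
    have := Finset.le_card_sdiff {j, k} A
    have := Finset.card_le_two (a := j) (b := k)
    omega
  simp only [Finset.mem_sdiff, Finset.mem_insert, Finset.mem_singleton, not_or] at hm
  obtain ⟨hmA, hmj, hmk⟩ := hm
  have hjm := hj m hmA
  have hkm := hk m hmA
  simp only [A, Finset.mem_filter, Real.ball_eq_Ioo, mem_Ioo] at hmA hjA hkA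
  refine ⟨m, hmA.1, fun z hz => ?_⟩
  simp only [Real.ball_eq_Ioo, mem_Ioo, mem_iUnion, Finset.mem_erase, exists_prop] at hz ⊢
  rcases lt_or_ge z (j.1 + j.2) with h | h
  · exact ⟨j, ⟨Ne.symm hmj, hjA.1⟩, by linarith, h⟩
  · exact ⟨k, ⟨Ne.symm hmk, hkA.1⟩, by linarith, by linarith⟩

lemma exists_subset_biUnion_ball_subset_card_le_two (t : Finset (ℝ × ℝ)) :
    ∃ t' ⊆ t, (⋃ p ∈ t, ball p.1 p.2) ⊆ (⋃ p ∈ t', ball p.1 p.2) ∧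
      ∀ y, #{p ∈ t' | y ∈ ball p.1 p.2} ≤ 2 := by
  induction t using Finset.strongInduction with
  | H t ih =>
    by_cases hmult : ∀ y, #{p ∈ t | y ∈ ball p.1 p.2} ≤ 2
    · exact ⟨t, subset_rfl, subset_rfl, hmult⟩
    obtain ⟨y, hy⟩ := not_forall.mp hmult
    rw [not_le] at hy
    obtain ⟨m, hmt, hm⟩ := exists_ball_subset_biUnion_erase_of_two_lt_card hy
    obtain ⟨t', ht't, hcover, ht'⟩ := ih _ (Finset.erase_ssubset hmt)
    refine ⟨t', ht't.trans (Finset.erase_subset _ _), ?_, ht'⟩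
    refine Set.iUnion₂_subset fun p hp => ?_
    by_cases hpm : p = m
    · exact hpm ▸ hm.trans hcover
    · exact fun z hz => hcover (mem_biUnion (Finset.mem_erase.mpr ⟨hpm, hp⟩) hz)

lemma sum_indicator_le_of_card_filter_le {α ι : Type*} (t : Finset ι) (B : ι → Set α)
    (u : α → ℝ≥0∞) {y : α} {n : ℕ} (hy : #{i ∈ t | y ∈ B i} ≤ n) :
    ∑ i ∈ t, (B i).indicator u y ≤ n * u y := by
  rw [Finset.sum_indicator_eq_sum_filter (f := fun _ => u) (g := fun _ => y), Finset.sum_const,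
    nsmul_eq_mul]
  gcongr

lemma mul_measure_biUnion_ball_le {μ : Measure ℝ} [IsLocallyFiniteMeasure μ] (u : ℝ → ℝ≥0∞)
    (U : Set ℝ) (s : ℝ≥0∞) :
    s * μ (⋃ p ∈ {p : ℝ × ℝ | ball p.1 p.2 ⊆ U ∧
        s * μ (ball p.1 p.2) < ∫⁻ y in ball p.1 p.2, u y ∂μ}, ball p.1 p.2)
      ≤ 2 * ∫⁻ y in U, u y ∂μ := by
  set F := {p : ℝ × ℝ | ball p.1 p.2 ⊆ U ∧
    s * μ (ball p.1 p.2) < ∫⁻ y in ball p.1 p.2, u y ∂μ}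
  rw [(isOpen_biUnion fun p _ => isOpen_ball).measure_eq_iSup_isCompact]
  simp only [ENNReal.mul_iSup]
  refine iSup_le fun K => iSup_le fun hKF => iSup_le fun hK => ?_
  obtain ⟨F', hF'F, hF'fin, hKF'⟩ := hK.elim_finite_subcover_image (fun p _ => isOpen_ball) hKF
  obtain ⟨t, htF', hcover, hmult⟩ :=
    exists_subset_biUnion_ball_subset_card_le_two hF'fin.toFinset
  have htF : ∀ p ∈ t, p ∈ F := fun p hp => hF'F (hF'fin.mem_toFinset.mp (htF' hp))
  calc s * μ K ≤ s * ∑ p ∈ t, μ (ball p.1 p.2) := by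
        gcongr
        refine (measure_mono (hKF'.trans ?_)).trans (measure_biUnion_finset_le _ _)
        simpa using hcover
    _ = ∑ p ∈ t, s * μ (ball p.1 p.2) := Finset.mul_sum _ _ _
    _ ≤ ∑ p ∈ t, ∫⁻ y in ball p.1 p.2, u y ∂μ :=
        Finset.sum_le_sum fun p hp => (htF p hp).2.le
    _ = ∑ p ∈ t, ∫⁻ y in U, (ball p.1 p.2).indicator u y ∂μ := by
        refine Finset.sum_congr rfl fun p hp => ?_
        rw [lintegral_indicator measurableSet_ball, Measure.restrict_restrict measurableSet_ball,
          inter_eq_left.mpr (htF p hp).1]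
    _ ≤ ∫⁻ y in U, ∑ p ∈ t, (ball p.1 p.2).indicator u y ∂μ :=
        sum_lintegral_le_lintegral_sum _ _ _
    _ ≤ ∫⁻ y in U, 2 * u y ∂μ :=
        lintegral_mono fun y => sum_indicator_le_of_card_filter_le _ _ _ (hmult y)
    _ = 2 * ∫⁻ y in U, u y ∂μ := lintegral_const_mul' _ _ (by norm_num)

end Covering

section Real

variable {μ : Measure ℝ} [IsLocallyFiniteMeasure μ]

lemma ae_eventually_ballAverageSup_le_add {h : ℝ → ℝ≥0} {U : Set ℝ} (hU : IsOpen U)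
    (hμU : μ U ≠ ∞) (hh : ∫⁻ y in U, h y ∂μ ≠ ∞) {ε : ℝ≥0} (hε : 0 < ε) :
    ∀ᵐ x ∂μ, x ∈ U → ∀ᶠ r in 𝓝[>] (0 : ℝ),
      ballAverageSup μ (fun y => h y) x r ≤ h x + ε := by
  have : IsFiniteMeasure (μ.restrict U) := isFiniteMeasure_restrict.mpr hμU
  refine ae_iff.mpr (nonpos_iff_eq_zero.mp (ENNReal.le_of_forall_pos_le_add fun δ hδ _ => ?_))
  rw [zero_add]
  -- `ε δ / 4` is what the weak type bound at threshold `ε / 2` turns into `μ E ≤ δ`.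
  obtain ⟨g, hgh, hg, hhg⟩ := exists_upperSemicontinuous_le_lintegral_le (μ := μ.restrict U) h hh
    (ε := ↑(ε * δ / 4)) (by simp [hε.ne', hδ.ne'])
  set u : ℝ → ℝ≥0∞ := fun y => h y - g y
  have hg' : UpperSemicontinuous fun y => (g y : ℝ≥0∞) :=
    ENNReal.continuous_coe.comp_upperSemicontinuous hg ENNReal.coe_mono
  have hgm : Measurable fun y => (g y : ℝ≥0∞) := hg'.measurable
  have hsplit : (fun y => (h y : ℝ≥0∞)) = u + fun y => (g y : ℝ≥0∞) :=
    funext fun y => (tsub_add_cancel_of_le (ENNReal.coe_le_coe.mpr (hgh y))).symm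
  have hu : ∫⁻ y in U, u y ∂μ ≤ ↑(ε * δ / 4) := by
    have hg_fin : ∫⁻ y in U, (g y : ℝ≥0∞) ∂μ ≠ ∞ :=
      ne_top_of_le_ne_top hh (lintegral_mono fun y => ENNReal.coe_le_coe.mpr (hgh y))
    rw [hsplit, Pi.add_def, lintegral_add_right _ hgm, add_comm] at hhg
    exact (ENNReal.add_le_add_iff_left hg_fin).mp hhg
  set E := ⋃ p ∈ {p : ℝ × ℝ | ball p.1 p.2 ⊆ U ∧
    ↑(ε / 2) * μ (ball p.1 p.2) < ∫⁻ y in ball p.1 p.2, u y ∂μ}, ball p.1 p.2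
  have hE : μ E ≤ δ := by
    refine (ENNReal.mul_le_mul_iff_right (by simp [hε.ne']) ENNReal.coe_ne_top).mp
      ((mul_measure_biUnion_ball_le u U _).trans ?_)
    calc 2 * ∫⁻ y in U, u y ∂μ ≤ 2 * ↑(ε * δ / 4) := by gcongr
      _ = ↑(ε / 2) * δ := by
          rw [← ENNReal.coe_ofNat, ← ENNReal.coe_mul, ← ENNReal.coe_mul]
          ring_nf
  refine le_trans (measure_mono fun x hx => ?_) hE
  obtain ⟨hxU, hx⟩ := Classical.not_imp.mp hx
  by_contra hxE
  apply hx
  have hu_small : ∀ᶠ r in 𝓝[>] (0 : ℝ), ballAverageSup μ u x r ≤ ↑(ε / 2) := by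
    filter_upwards [eventually_forall_ball_subset_of_mem_nhds (hU.mem_nhds hxU)] with r hr
    exact ballAverageSup_le fun c hc =>
      not_lt.mp fun hlt => hxE (mem_biUnion (x := (c, r)) ⟨hr c hc, hlt⟩ hc)
  have hg_small := UpperSemicontinuousAt.eventually_ballAverageSup_le (μ := μ) (hg' x)
    (ENNReal.lt_add_right ENNReal.coe_ne_top (by simp [hε.ne'] : ((ε / 2 : ℝ≥0) : ℝ≥0∞) ≠ 0))
  filter_upwards [hu_small, hg_small] with r hru hrg
  calc ballAverageSup μ (fun y => h y) x r
      ≤ ballAverageSup μ u x r + ballAverageSup μ (fun y => g y) x r :=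
        hsplit ▸ ballAverageSup_add_le hgm x r
    _ ≤ ↑(ε / 2) + (g x + ↑(ε / 2)) := add_le_add hru hrg
    _ = ↑(g x + ε) := by push_cast; rw [add_comm, add_assoc, ENNReal.add_halves]
    _ ≤ h x + ε := mod_cast add_le_add (hgh x) le_rfl

lemma ae_eventually_ballAverageSup_le {h : ℝ → ℝ≥0}
    (hh : ∀ R, 0 < R → ∫⁻ y in ball 0 R, h y ∂μ ≠ ∞) :
    ∀ᵐ x ∂μ, ∀ ε : ℝ≥0, 0 < ε → ∀ᶠ r in 𝓝[>] (0 : ℝ),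
      ballAverageSup μ (fun y => h y) x r ≤ h x + ε := by
  have hNk : ∀ N k : ℕ, ∀ᵐ x ∂μ, x ∈ ball (0 : ℝ) (N + 1) → ∀ᶠ r in 𝓝[>] (0 : ℝ),
      ballAverageSup μ (fun y => h y) x r ≤ h x + (1 / (k + 1) : ℝ≥0) := fun N k =>
    ae_eventually_ballAverageSup_le_add isOpen_ball measure_ball_lt_top.ne
      (hh _ N.cast_add_one_pos) (by positivity)
  filter_upwards [ae_all_iff.mpr fun N => ae_all_iff.mpr (hNk N)] with x hx ε hε
  obtain ⟨N, hN⟩ := exists_nat_gt (dist x 0)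
  obtain ⟨k, hk⟩ := exists_nat_one_div_lt hε
  filter_upwards [hx N k (mem_ball.mpr (hN.trans (lt_add_one _)))] with r hr
  exact hr.trans (by gcongr)

end Real

/-- For any Borel measure `μ` on `ℝ` assigning positive finite measure to
every open ball and any `f ∈ L¹_loc(μ)`, for μ-a.e. `x` one has
`lim_{r→0} sup_{B ∋ x, r(B)=r} (1/μ(B)) ∫_B |f(y) − f(x)| dμ(y) = 0`. -/
theorem ae_lebesgue_point_real (μ : Measure ℝ)
    (hμ : ∀ (c r : ℝ), 0 < r → 0 < μ (Metric.ball c r) ∧ μ (Metric.ball c r) < ⊤)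
    (f : ℝ → ℝ) (hf : LocallyIntegrableBall μ f) :
    ∀ᵐ x ∂μ, Filter.Tendsto
      (fun r : ℝ => ⨆ (c : ℝ) (_ : x ∈ Metric.ball c r),
        (∫⁻ y in Metric.ball c r, ENNReal.ofReal |f y - f x| ∂μ) / μ (Metric.ball c r))
      (nhdsWithin 0 (Set.Ioi 0)) (nhds 0) := by
  have : IsLocallyFiniteMeasure μ :=
    ⟨fun x => ⟨ball x 1, ball_mem_nhds x one_pos, (hμ x 1 one_pos).2⟩⟩
  have hq (q : ℚ) : ∀ᵐ x ∂μ, ∀ ε : ℝ≥0, 0 < ε → ∀ᶠ r in 𝓝[>] (0 : ℝ),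
      ballAverageSup μ (fun y => ENNReal.ofReal |f y - q|) x r ≤ ENNReal.ofReal |f x - q| + ε :=
    ae_eventually_ballAverageSup_le (h := fun y => (|f y - q|).toNNReal)
      fun R hR => (hf.sub_const q 0 R hR).ne
  filter_upwards [ae_all_iff.mpr hq] with x hx
  refine ENNReal.tendsto_nhds_zero.mpr fun ε hε => ?_
  obtain ⟨δ, hδ, hδε⟩ := ENNReal.lt_iff_exists_nnreal_btwn.mp hε
  have hδ3 : 0 < δ / 3 := div_pos (ENNReal.coe_pos.mp hδ) three_pos
  obtain ⟨q, hq⟩ := exists_rat_near (f x) (NNReal.coe_pos.mpr hδ3)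
  have hfxq : ENNReal.ofReal |f x - q| ≤ ↑(δ / 3) :=
    (ENNReal.ofReal_le_ofReal hq.le).trans_eq ENNReal.ofReal_coe_nnreal
  filter_upwards [hx q (δ / 3) hδ3] with r hr
  calc ballAverageSup μ (fun y => ENNReal.ofReal |f y - f x|) x r
      ≤ ballAverageSup μ (fun y => ENNReal.ofReal |f y - q|) x r + ENNReal.ofReal |q - f x| :=
        ballAverageSup_ofReal_abs_sub_le f _ _ x r
    _ ≤ ↑(δ / 3) + ↑(δ / 3) + ↑(δ / 3) := by
        rw [abs_sub_comm]
        gcongr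
        exact hr.trans (add_le_add hfxq le_rfl)
    _ = δ := by push_cast; exact ENNReal.add_thirds _
    _ ≤ ε := hδε.le
end

section
/- Let μ be a Borel measure on ℝ^d (d ≥ 1, Euclidean metric) with 0 < μ(B) < ∞ for every open ball B, and assume there exists y₀ ∈ ℝ^d with limsup_{r→∞} μ(B_{r+1}(y₀))/μ(B_r(y₀)) < ∞. Then the centered Hardy–Littlewood maximal operator M^c possesses the dichotomy property: for every f ∈ L¹_loc(μ), if M^c f(x₀) < ∞ for some x₀ ∈ ℝ^d, then M^c f(x) < ∞ for μ-almost every x ∈ ℝ^d. -/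
/-!
Write `ν = |f| μ`, so that `M^c f(x) = sup_{r > 0} ν(B_r(x)) / μ(B_r(x))`. For `μ`-a.e. `x` the
Besicovitch differentiation theorem bounds this ratio for small `r`, and for intermediate `r` it
is at most `ν(B_R(x)) / μ(B_δ(x)) < ∞`. For large `r` one compares with `x₀`:
`ν(B_r(x)) ≤ ν(B_{r+|x-x₀|}(x₀)) ≤ M^c f(x₀) μ(B_{r+|x-x₀|}(x₀))`, and this last ball lies in a ball
about `y₀` whose radius exceeds that of `B_{r-|x-y₀|}(y₀) ⊆ B_r(x)` by a bounded integer `n`; the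
growth condition at `y₀` costs a factor `C^n` for these `n` unit steps.
-/

open MeasureTheory Metric Filter Set ENNReal

open Topology

theorem le_pow_mul_of_le_mul_add_one {g : ℝ → ℝ≥0∞} {C : ℝ≥0∞} {R : ℝ}
    (h : ∀ r, R ≤ r → g (r + 1) ≤ C * g r) (n : ℕ) {r : ℝ} (hr : R ≤ r) :
    g (r + n) ≤ C ^ n * g r := by
  induction n with
  | zero => simp
  | succ n ih =>
    calc g (r + (n + 1 : ℕ)) = g (r + n + 1) := by push_cast; ring_nf
      _ ≤ C * g (r + n) := h _ (by linarith [(n.cast_nonneg : (0 : ℝ) ≤ n)])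
      _ ≤ C * (C ^ n * g r) := by gcongr
      _ = C ^ (n + 1) * g r := by ring

theorem exists_le_pow_mul_of_limsup_div_lt_top {g : ℝ → ℝ≥0∞}
    (h : limsup (fun r => g (r + 1) / g r) atTop < ∞) :
    ∃ C ≠ ∞, ∀ᶠ r in atTop, ∀ n : ℕ, g (r + n) ≤ C ^ n * g r := by
  set C := limsup (fun r => g (r + 1) / g r) atTop + 1
  have hC0 : C ≠ 0 := by simp [C]
  have hCtop : C ≠ ∞ := add_ne_top.2 ⟨h.ne, one_ne_top⟩
  obtain ⟨R, hR⟩ := eventually_atTop.1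
    (eventually_lt_of_limsup_lt (ENNReal.lt_add_right h.ne one_ne_zero))
  refine ⟨C, hCtop, eventually_atTop.2 ⟨R, fun r hr n => ?_⟩⟩
  refine le_pow_mul_of_le_mul_add_one (fun s hs => ?_) n hr
  exact (ENNReal.div_le_iff_le_mul (Or.inr hCtop) (Or.inr hC0)).1 (hR s hs).le

section PseudoMetric

variable {X : Type*} [PseudoMetricSpace X]

theorem iUnion_closedBall_sub_one_div (x : X) (r : ℝ) :
    ⋃ n : ℕ, closedBall x (r - 1 / (n + 1)) = ball x r := by
  ext y
  simp only [mem_iUnion, mem_closedBall, mem_ball]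
  constructor
  · rintro ⟨n, hn⟩
    linarith [Nat.one_div_pos_of_nat (α := ℝ) (n := n)]
  · intro h
    obtain ⟨n, hn⟩ := exists_nat_one_div_lt (sub_pos.2 h)
    exact ⟨n, by linarith⟩

variable [MeasurableSpace X] {μ ν : Measure X}

noncomputable def centeredMaximalRatio (ν μ : Measure X) (x : X) : ℝ≥0∞ :=
  ⨆ (r : ℝ) (_ : 0 < r), ν (ball x r) / μ (ball x r)

theorem centeredMaximal_eq_centeredMaximalRatio [OpensMeasurableSpace X] (f : X → ℝ) (x : X) :
    centeredMaximal μ f x =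
      centeredMaximalRatio (μ.withDensity fun y => ENNReal.ofReal |f y|) μ x := by
  simp only [centeredMaximal, centeredMaximalRatio, withDensity_apply _ measurableSet_ball]

theorem measure_ball_le_centeredMaximalRatio_mul {x : X} {r : ℝ} (hr : 0 < r)
    (hx : centeredMaximalRatio ν μ x ≠ ∞) (hμ : μ (ball x r) ≠ ∞) :
    ν (ball x r) ≤ centeredMaximalRatio ν μ x * μ (ball x r) :=
  (ENNReal.div_le_iff_le_mul (Or.inr hx) (Or.inl hμ)).1 <|
    le_iSup₂ (f := fun r (_ : 0 < r) => ν (ball x r) / μ (ball x r)) r hr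

theorem centeredMaximalRatio_lt_top {x : X} {K₁ K₂ : ℝ≥0∞} (hK₁ : K₁ ≠ ∞) (hK₂ : K₂ ≠ ∞)
    (hsmall : ∀ᶠ r in 𝓝[>] 0, ν (ball x r) ≤ K₁ * μ (ball x r))
    (hlarge : ∀ᶠ r in atTop, ν (ball x r) ≤ K₂ * μ (ball x r))
    (hν : ∀ r, 0 < r → ν (ball x r) < ∞) (hμ : ∀ r, 0 < r → μ (ball x r) ≠ 0) :
    centeredMaximalRatio ν μ x < ∞ := by
  obtain ⟨δ, hδ, hsmall⟩ := mem_nhdsGT_iff_exists_Ioc_subset.1 hsmall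
  obtain ⟨R, hR⟩ := (hlarge.and (eventually_ge_atTop δ)).exists_forall_of_atTop
  have hδR : δ ≤ R := (hR R le_rfl).2
  have hR0 : (0 : ℝ) < R := lt_of_lt_of_le hδ hδR
  have hmid : ν (ball x R) / μ (ball x δ) ≠ ∞ := div_ne_top (hν R hR0).ne (hμ δ hδ)
  refine lt_of_le_of_lt (iSup₂_le fun r hr => ?_)
    (max_lt hK₁.lt_top (max_lt hK₂.lt_top hmid.lt_top))
  rcases le_or_gt r δ with hrδ | hδr
  · exact le_max_of_le_left (div_le_of_le_mul (hsmall ⟨hr, hrδ⟩))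
  rcases le_or_gt R r with hRr | hrR
  · exact le_max_of_le_right (le_max_of_le_left (div_le_of_le_mul (hR r hRr).1))
  · exact le_max_of_le_right (le_max_of_le_right (ENNReal.div_le_div
      (measure_mono (ball_subset_ball hrR.le)) (measure_mono (ball_subset_ball hδr.le))))

theorem eventually_measure_ball_le_mul_of_growth {x₀ y₀ : X} {M C : ℝ≥0∞}
    (hx₀ : ∀ r, 0 < r → ν (ball x₀ r) ≤ M * μ (ball x₀ r))
    (hy₀ : ∀ᶠ r in atTop, ∀ n : ℕ, μ (ball y₀ (r + n)) ≤ C ^ n * μ (ball y₀ r)) (x : X) :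
    ∀ᶠ r in atTop,
      ν (ball x r) ≤ M * C ^ ⌈dist x x₀ + dist x₀ y₀ + dist x y₀⌉₊ * μ (ball x r) := by
  set n := ⌈dist x x₀ + dist x₀ y₀ + dist x y₀⌉₊
  have hn : dist x x₀ + dist x₀ y₀ + dist x y₀ ≤ n := Nat.le_ceil _
  filter_upwards [(tendsto_atTop_add_const_right atTop (-dist x y₀) tendsto_id).eventually hy₀,
    eventually_gt_atTop 0] with r hgrowth hr
  rw [id, ← sub_eq_add_neg] at hgrowth
  calc ν (ball x r) ≤ ν (ball x₀ (r + dist x x₀)) := measure_mono (ball_subset_ball' le_rfl)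
    _ ≤ M * μ (ball x₀ (r + dist x x₀)) := hx₀ _ (by positivity)
    _ ≤ M * μ (ball y₀ (r - dist x y₀ + n)) := by
      gcongr; exact ball_subset_ball' (by linarith)
    _ ≤ M * (C ^ n * μ (ball y₀ (r - dist x y₀))) := by gcongr; exact hgrowth n
    _ ≤ M * C ^ n * μ (ball x r) := by
      rw [← mul_assoc]; gcongr; exact ball_subset_ball' (by rw [dist_comm]; linarith)

theorem measure_ball_le_mul_of_closedBall {x : X} {r : ℝ} {K : ℝ≥0∞}
    (h : ∀ s ∈ Ioo 0 r, ν (closedBall x s) ≤ K * μ (closedBall x s)) :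
    ν (ball x r) ≤ K * μ (ball x r) := by
  rcases le_or_gt r 0 with hr | hr
  · simp [ball_eq_empty.2 hr]
  have hmono : Monotone fun n : ℕ => closedBall x (r - 1 / (n + 1)) := fun m n hmn =>
    closedBall_subset_closedBall (by gcongr)
  rw [← iUnion_closedBall_sub_one_div, hmono.measure_iUnion, iUnion_closedBall_sub_one_div]
  refine iSup_le fun n => ?_
  -- `r - 1 / (n + 1)` may be nonpositive, outside the range of `h`: enlarge it to at least `r / 2`
  set s := max (r - 1 / (n + 1)) (r / 2)
  have hs : s ∈ Ioo 0 r :=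
    ⟨lt_max_of_lt_right (half_pos hr), max_lt (by simp only [sub_lt_self_iff]; positivity)
      (half_lt_self hr)⟩
  calc ν (closedBall x (r - 1 / (n + 1))) ≤ ν (closedBall x s) :=
        measure_mono (closedBall_subset_closedBall (le_max_left _ _))
    _ ≤ K * μ (closedBall x s) := h s hs
    _ ≤ K * μ (ball x r) := by gcongr; exact closedBall_subset_ball hs.2

end PseudoMetric

section Besicovitch

variable {X : Type*} [MetricSpace X] [MeasurableSpace X] [BorelSpace X]
  [SecondCountableTopology X] [HasBesicovitchCovering X] {μ ν : Measure X}

theorem ae_eventually_measure_ball_le_mul [IsLocallyFiniteMeasure μ] [IsLocallyFiniteMeasure ν] :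
    ∀ᵐ x ∂μ, ∃ K ≠ ∞, ∀ᶠ r in 𝓝[>] 0, ν (ball x r) ≤ K * μ (ball x r) := by
  filter_upwards [Besicovitch.ae_tendsto_rnDeriv ν μ, Measure.rnDeriv_lt_top ν μ] with x hx hlt
  have hK : ν.rnDeriv μ x + 1 ≠ ∞ := add_ne_top.2 ⟨hlt.ne, one_ne_top⟩
  refine ⟨_, hK, ?_⟩
  obtain ⟨δ, hδ, hclosed⟩ := mem_nhdsGT_iff_exists_Ioc_subset.1
    (hx.eventually_lt_const (ENNReal.lt_add_right hlt.ne one_ne_zero))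
  filter_upwards [Ioo_mem_nhdsGT hδ] with r hr
  refine measure_ball_le_mul_of_closedBall fun s hs => ?_
  exact (ENNReal.div_le_iff_le_mul (Or.inr hK) (Or.inr (by simp))).1
    (hclosed ⟨hs.1, hs.2.le.trans hr.2.le⟩).le

theorem ae_centeredMaximalRatio_lt_top
    (hμ : ∀ x r, 0 < r → 0 < μ (ball x r) ∧ μ (ball x r) < ∞)
    (hν : ∀ x r, 0 < r → ν (ball x r) < ∞) {y₀ : X}
    (hgrowth : limsup (fun r => μ (ball y₀ (r + 1)) / μ (ball y₀ r)) atTop < ∞)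
    {x₀ : X} (hx₀ : centeredMaximalRatio ν μ x₀ < ∞) :
    ∀ᵐ x ∂μ, centeredMaximalRatio ν μ x < ∞ := by
  have : IsLocallyFiniteMeasure μ :=
    ⟨fun x => ⟨ball x 1, ball_mem_nhds x one_pos, (hμ x 1 one_pos).2⟩⟩
  have : IsLocallyFiniteMeasure ν := ⟨fun x => ⟨ball x 1, ball_mem_nhds x one_pos, hν x 1 one_pos⟩⟩
  obtain ⟨C, hC, hy₀⟩ := exists_le_pow_mul_of_limsup_div_lt_top
    (g := fun r => μ (ball y₀ r)) hgrowth
  have hx₀_le r (hr : 0 < r) :=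
    measure_ball_le_centeredMaximalRatio_mul hr hx₀.ne (hμ x₀ r hr).2.ne
  filter_upwards [ae_eventually_measure_ball_le_mul (ν := ν)] with x ⟨K, hK, hsmall⟩
  exact centeredMaximalRatio_lt_top hK (mul_ne_top hx₀.ne (pow_ne_top hC)) hsmall
    (eventually_measure_ball_le_mul_of_growth hx₀_le hy₀ x) (hν x) (fun r hr => (hμ x r hr).1.ne')

end Besicovitch

theorem dichotomy_centered_of_condC_general (d : ℕ)
    (μ : Measure (EuclideanSpace ℝ (Fin d)))
    (hμ : ∀ (c : EuclideanSpace ℝ (Fin d)) (r : ℝ), 0 < r →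
      0 < μ (Metric.ball c r) ∧ μ (Metric.ball c r) < ⊤)
    (y₀ : EuclideanSpace ℝ (Fin d))
    (hC : Filter.limsup (fun r : ℝ => μ (Metric.ball y₀ (r + 1)) / μ (Metric.ball y₀ r))
      Filter.atTop < ⊤)
    (f : EuclideanSpace ℝ (Fin d) → ℝ) (hf : LocallyIntegrableBall μ f)
    (x₀ : EuclideanSpace ℝ (Fin d)) (hx₀ : centeredMaximal μ f x₀ < ⊤) :
    ∀ᵐ x ∂μ, centeredMaximal μ f x < ⊤ := by
  simp only [centeredMaximal_eq_centeredMaximalRatio] at hx₀ ⊢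
  refine ae_centeredMaximalRatio_lt_top hμ (fun c r hr => ?_) hC hx₀
  rw [withDensity_apply _ measurableSet_ball]
  exact hf c r hr

/-- For a Borel measure on `ℝ^d` giving positive finite measure to every
open ball, if `limsup_{r→∞} μ(B_{r+1}(y₀))/μ(B_r(y₀)) < ∞` for some `y₀`, then the centered
maximal operator possesses the dichotomy property: if `M^c f(x₀) < ∞` for some `x₀`, then
`M^c f < ∞` μ-a.e. -/
theorem dichotomy_centered_of_condC (d : ℕ) (hd : 1 ≤ d)
    (μ : Measure (EuclideanSpace ℝ (Fin d)))
    (hμ : ∀ (c : EuclideanSpace ℝ (Fin d)) (r : ℝ), 0 < r →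
      0 < μ (Metric.ball c r) ∧ μ (Metric.ball c r) < ⊤)
    (y₀ : EuclideanSpace ℝ (Fin d))
    (hC : Filter.limsup (fun r : ℝ => μ (Metric.ball y₀ (r + 1)) / μ (Metric.ball y₀ r))
      Filter.atTop < ⊤)
    (f : EuclideanSpace ℝ (Fin d) → ℝ) (hf : LocallyIntegrableBall μ f)
    (x₀ : EuclideanSpace ℝ (Fin d)) (hx₀ : centeredMaximal μ f x₀ < ⊤) :
    ∀ᵐ x ∂μ, centeredMaximal μ f x < ⊤ :=
  dichotomy_centered_of_condC_general d μ hμ y₀ hC f hf x₀ hx₀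
end

section
/- Let μ be a measure on ℤ^d (d ≥ 1) equipped with the supremum metric d_∞, assigning to each point x ∈ ℤ^d a weight μ({x}) ∈ (0, ∞), and assume there exists y₀ ∈ ℤ^d with limsup_{r→∞} μ(B_{r+1}(y₀))/μ(B_r(y₀)) < ∞, where B_r(x) is the open d_∞-ball of radius r centered at x. Then the centered maximal operator M^c on (ℤ^d, d_∞, μ) possesses the dichotomy property: for every f ∈ L¹_loc(μ), if M^c f(x₀) < ∞ for some x₀ ∈ ℤ^d, then M^c f(x) < ∞ for every x ∈ ℤ^d outside a set of μ-measure zero. -/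
open MeasureTheory Metric Filter Set ENNReal

/-
If `M^c f(x₀) < ∞`, the integral of `|f|` over any ball centred at `x₀` is at most
`M^c f(x₀)` times the measure of that ball. For a point `x` and a large radius `r`, the ball
`B(x, r)` is squeezed between `B(y₀, s)` and `B(x₀, r + d(x, x₀)) ⊆ B(y₀, s + k)`, where
`s = r - d(x, y₀)` and `k` depends only on `x`, `x₀`, `y₀`; iterating the growth condition
`μ(B(y₀, s + 1)) ≤ C μ(B(y₀, s))` then bounds the average over `B(x, r)` by `C^k M^c f(x₀)`.
Small radii are controlled by the atom `μ{x} > 0` and local integrability, so `M^c f` is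
finite at every point.
-/

lemma exists_eventually_le_mul_of_limsup_div_lt_top {α : Type*} {l : Filter α}
    {u v : α → ℝ≥0∞} (hv : ∀ a, v a ≠ ∞) (h : limsup (fun a => u a / v a) l < ∞) :
    ∃ C ≠ ∞, ∀ᶠ a in l, u a ≤ C * v a := by
  obtain ⟨C, hlt, hC⟩ := exists_between h
  refine ⟨C, hC.ne, ?_⟩
  filter_upwards [eventually_lt_of_limsup_lt hlt] with a ha
  exact (ENNReal.div_le_iff_le_mul (Or.inr hC.ne) (Or.inl (hv a))).1 ha.le

lemma le_pow_mul_of_forall_add_one_le_mul {g : ℝ → ℝ≥0∞} {C : ℝ≥0∞} {r₀ : ℝ}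
    (hg : ∀ s, r₀ ≤ s → g (s + 1) ≤ C * g s) (k : ℕ) {s : ℝ} (hs : r₀ ≤ s) :
    g (s + k) ≤ C ^ k * g s := by
  induction k with
  | zero => simp
  | succ k ih =>
    calc g (s + (k + 1 : ℕ)) = g (s + k + 1) := by push_cast; ring_nf
      _ ≤ C * g (s + k) := hg _ (by linarith [(Nat.cast_nonneg k : (0 : ℝ) ≤ k)])
      _ ≤ C * (C ^ k * g s) := by gcongr
      _ = C ^ (k + 1) * g s := by ring

section CenteredMaximal

variable {X : Type*} [PseudoMetricSpace X] [MeasurableSpace X] {μ : Measure X} {f : X → ℝ}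

noncomputable def ballAverage (μ : Measure X) (f : X → ℝ) (x : X) (r : ℝ) : ℝ≥0∞ :=
  (∫⁻ y in ball x r, ENNReal.ofReal |f y| ∂μ) / μ (ball x r)

lemma ballAverage_le_centeredMaximal {x : X} {r : ℝ} (hr : 0 < r) :
    ballAverage μ f x r ≤ centeredMaximal μ f x :=
  le_iSup₂ (f := fun r (_ : 0 < r) => ballAverage μ f x r) r hr

lemma setLIntegral_ball_le_centeredMaximal_mul {x : X} {r : ℝ} (hr : 0 < r)
    (hfin : μ (ball x r) ≠ ∞) :
    ∫⁻ y in ball x r, ENNReal.ofReal |f y| ∂μ ≤ centeredMaximal μ f x * μ (ball x r) := by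
  rcases eq_or_ne (μ (ball x r)) 0 with h0 | h0
  · rw [setLIntegral_measure_zero _ _ h0]
    exact zero_le
  · exact (ENNReal.div_le_iff_le_mul (Or.inl h0) (Or.inl hfin)).1
      (ballAverage_le_centeredMaximal hr)

lemma ballAverage_le_of_le_radius {x : X} {r R : ℝ} (hr : 0 < r) (hrR : r ≤ R) :
    ballAverage μ f x r ≤ (∫⁻ y in ball x R, ENNReal.ofReal |f y| ∂μ) / μ {x} :=
  ENNReal.div_le_div (lintegral_mono_set (ball_subset_ball hrR))
    (measure_mono (singleton_subset_iff.2 (mem_ball_self hr)))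

lemma ballAverage_le_centeredMaximal_mul_pow (hfin : ∀ c r, μ (ball c r) ≠ ∞)
    {y₀ : X} {C : ℝ≥0∞} {r₀ : ℝ}
    (hgrowth : ∀ s, r₀ ≤ s → μ (ball y₀ (s + 1)) ≤ C * μ (ball y₀ s)) (x₀ x : X) {r : ℝ}
    (hr : 0 < r) (hr₀ : r₀ + dist x y₀ < r) :
    ballAverage μ f x r ≤
      centeredMaximal μ f x₀ * C ^ ⌈2 * dist x y₀ + 2 * dist x₀ y₀⌉₊ := by
  set a := dist x y₀
  set b := dist x₀ y₀
  set k := ⌈2 * a + 2 * b⌉₊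
  have hk : 2 * a + 2 * b ≤ k := Nat.le_ceil _
  have hxx₀ : dist x x₀ ≤ a + b := (dist_triangle x y₀ x₀).trans_eq (by rw [dist_comm y₀ x₀])
  have hxy₀ : dist y₀ x = a := dist_comm y₀ x
  have hb : 0 ≤ b := dist_nonneg
  have h_inner : ball y₀ (r - a) ⊆ ball x r := ball_subset_ball' (by linarith)
  have h_mid : ball x r ⊆ ball x₀ (r + a + b) := ball_subset_ball' (by linarith)
  have h_outer : ball x₀ (r + a + b) ⊆ ball y₀ (r - a + k) := ball_subset_ball' (by linarith)
  refine ENNReal.div_le_of_le_mul ?_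
  calc ∫⁻ y in ball x r, ENNReal.ofReal |f y| ∂μ
      ≤ ∫⁻ y in ball x₀ (r + a + b), ENNReal.ofReal |f y| ∂μ := lintegral_mono_set h_mid
    _ ≤ centeredMaximal μ f x₀ * μ (ball x₀ (r + a + b)) :=
        setLIntegral_ball_le_centeredMaximal_mul (by linarith [dist_nonneg (x := x) (y := y₀)])
          (hfin _ _)
    _ ≤ centeredMaximal μ f x₀ * μ (ball y₀ (r - a + k)) := by gcongr
    _ ≤ centeredMaximal μ f x₀ * (C ^ k * μ (ball y₀ (r - a))) := by
        gcongr
        exact le_pow_mul_of_forall_add_one_le_mul hgrowth k (by linarith)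
    _ ≤ centeredMaximal μ f x₀ * C ^ k * μ (ball x r) := by
        rw [← mul_assoc]
        gcongr

theorem centeredMaximal_lt_top_of_ball_growth (hfin : ∀ c r, μ (ball c r) ≠ ∞)
    (hatom : ∀ x, μ {x} ≠ 0) {y₀ : X} {C : ℝ≥0∞} (hC : C ≠ ∞) {r₀ : ℝ}
    (hgrowth : ∀ s, r₀ ≤ s → μ (ball y₀ (s + 1)) ≤ C * μ (ball y₀ s))
    (hf : LocallyIntegrableBall μ f) {x₀ : X} (hx₀ : centeredMaximal μ f x₀ < ∞) (x : X) :
    centeredMaximal μ f x < ∞ := by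
  set R := |r₀| + dist x y₀ + 1
  have hR : 0 < R := by positivity
  have hbound : centeredMaximal μ f x ≤
      max ((∫⁻ y in ball x R, ENNReal.ofReal |f y| ∂μ) / μ {x})
        (centeredMaximal μ f x₀ * C ^ ⌈2 * dist x y₀ + 2 * dist x₀ y₀⌉₊) := by
    refine iSup₂_le fun r hr => ?_
    rcases le_or_gt r R with hrR | hRr
    · exact le_max_of_le_left (ballAverage_le_of_le_radius hr hrR)
    · refine le_max_of_le_right (ballAverage_le_centeredMaximal_mul_pow hfin hgrowth x₀ x hr ?_)
      linarith [le_abs_self r₀]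
  refine hbound.trans_lt (max_lt ?_ ?_)
  · exact ENNReal.div_lt_top (hf x R hR).ne (hatom x)
  · exact ENNReal.mul_lt_top hx₀ (ENNReal.pow_lt_top hC.lt_top)

end CenteredMaximal

section Atomic

variable {X : Type*} [MeasurableSpace X] [MeasurableSingletonClass X] (w : X → ℝ≥0∞)

lemma count_withDensity_singleton (x : X) : Measure.count.withDensity w {x} = w x := by
  rw [withDensity_apply _ (measurableSet_singleton x), lintegral_singleton,
    Measure.count_singleton, mul_one]

lemma count_withDensity_ne_top_of_finite (hw : ∀ x, w x ≠ ∞) {s : Set X} (hs : s.Finite) :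
    Measure.count.withDensity w s ≠ ∞ := by
  rw [withDensity_apply _ hs.measurableSet, ← hs.coe_toFinset, lintegral_finset]
  exact ENNReal.sum_ne_top.2 fun x _ => by simp [hw x]

end Atomic

lemma finite_ball {X : Type*} [PseudoMetricSpace X] [ProperSpace X] [DiscreteTopology X]
    (x : X) (r : ℝ) : (ball x r).Finite :=
  ((isCompact_closedBall x r).finite (isDiscrete_iff_discreteTopology.2 inferInstance)).subset
    ball_subset_closedBall

theorem dichotomy_centered_int_of_condC_general (d : ℕ)
    (w : (Fin d → ℤ) → ℝ≥0∞) (hw : ∀ x, 0 < w x ∧ w x < ⊤)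
    (μ : Measure (Fin d → ℤ)) (hμ : μ = Measure.count.withDensity w)
    (y₀ : Fin d → ℤ)
    (hC : Filter.limsup (fun r : ℝ => μ (Metric.ball y₀ (r + 1)) / μ (Metric.ball y₀ r))
      Filter.atTop < ⊤)
    (f : (Fin d → ℤ) → ℝ) (hf : LocallyIntegrableBall μ f)
    (x₀ : Fin d → ℤ) (hx₀ : centeredMaximal μ f x₀ < ⊤) :
    ∀ᵐ x ∂μ, centeredMaximal μ f x < ⊤ := by
  have hfin : ∀ c r, μ (ball c r) ≠ ∞ := fun c r => hμ ▸
    count_withDensity_ne_top_of_finite w (fun x => (hw x).2.ne) (finite_ball c r)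
  have hatom : ∀ x, μ {x} ≠ 0 := fun x => by
    rw [hμ, count_withDensity_singleton]
    exact (hw x).1.ne'
  obtain ⟨C, hC_ne_top, hgrowth⟩ :=
    exists_eventually_le_mul_of_limsup_div_lt_top (fun r => hfin y₀ r) hC
  obtain ⟨r₀, hr₀⟩ := eventually_atTop.1 hgrowth
  exact ae_of_all μ <|
    centeredMaximal_lt_top_of_ball_growth hfin hatom hC_ne_top hr₀ hf hx₀

/-- On `ℤ^d` with the supremum metric and a measure determined by strictly
positive finite point weights, if `limsup_{r→∞} μ(B_{r+1}(y₀))/μ(B_r(y₀)) < ∞` for some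
`y₀`, then the centered maximal operator possesses the dichotomy property. -/
theorem dichotomy_centered_int_of_condC (d : ℕ) (hd : 1 ≤ d)
    (w : (Fin d → ℤ) → ℝ≥0∞) (hw : ∀ x, 0 < w x ∧ w x < ⊤)
    (μ : Measure (Fin d → ℤ)) (hμ : μ = Measure.count.withDensity w)
    (y₀ : Fin d → ℤ)
    (hC : Filter.limsup (fun r : ℝ => μ (Metric.ball y₀ (r + 1)) / μ (Metric.ball y₀ r))
      Filter.atTop < ⊤)
    (f : (Fin d → ℤ) → ℝ) (hf : LocallyIntegrableBall μ f)
    (x₀ : Fin d → ℤ) (hx₀ : centeredMaximal μ f x₀ < ⊤) :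
    ∀ᵐ x ∂μ, centeredMaximal μ f x < ⊤ :=
  dichotomy_centered_int_of_condC_general d w hw μ hμ y₀ hC f hf x₀ hx₀
end

section
/- Let μ be a Borel measure on ℝ^d (d ≥ 1, Euclidean metric) with μ(ℝ^d) < ∞, determined by a strictly positive weight w (i.e. dμ = w dx with respect to Lebesgue measure) such that for every n ∈ ℕ there are constants 0 < c_n ≤ C_n < ∞ with c_n ≤ w(x) ≤ C_n for all x in the ball B_n(0). Then both the non-centered maximal operator M and the centered maximal operator M^c associated with (ℝ^d, d_e, μ) possess the dichotomy property. -/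
open MeasureTheory Metric Filter Set ENNReal

open scoped NNReal Topology

/-!
If `∫ |f| dμ = ∞`, then since `μ` is finite the centered averages of `|f|` over the balls `B(x, n)`
tend to `∞` at every `x`, so both maximal functions are identically `∞`.

If `∫ |f| dμ < ∞`, then `ρ = |f| μ` is a finite measure, and by Besicovitch's differentiation
theorem `ρ(B̄(x, r)) / μ(B̄(x, r))` stays bounded as `r → 0` for `μ`-a.e. `x`. On bounded sets `μ` is
comparable to Lebesgue measure, hence doubling there, which transfers this bound from the balls
centered at `x` to all small balls containing `x`. A large ball containing `x` contains a ball of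
fixed radius close to `x`, so its `μ`-measure is bounded below and its average is at most
`∫ |f| dμ` divided by that bound.
-/

def ComparableOnBoundedSets {X : Type*} [MeasurableSpace X] [PseudoMetricSpace X]
    (μ ν : Measure X) : Prop :=
  ∀ K : Set X, Bornology.IsBounded K → ∃ a b : ℝ≥0, 0 < a ∧
    ∀ s ⊆ K, MeasurableSet s → a * ν s ≤ μ s ∧ μ s ≤ b * ν s

section PseudoMetricSpace

variable {X : Type*} [MeasurableSpace X] [PseudoMetricSpace X] {μ : Measure X} {f : X → ℝ}

theorem centeredMaximal_le_noncenteredMaximal (x : X) :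
    centeredMaximal μ f x ≤ noncenteredMaximal μ f x :=
  iSup₂_le fun r hr => le_iSup_of_le x <| le_iSup_of_le r <| le_iSup₂_of_le hr (mem_ball_self hr)
    le_rfl

theorem centeredMaximal_eq_top [IsFiniteMeasure μ] (hf : ∫⁻ y, ENNReal.ofReal |f y| ∂μ = ⊤)
    (x : X) : centeredMaximal μ f x = ⊤ := by
  refine top_unique ?_
  have hballs : ⨆ n : ℕ, ∫⁻ y in ball x (n + 1), ENNReal.ofReal |f y| ∂μ = ⊤ := by
    rw [← setLIntegral_iUnion_of_directed _ ?_, iUnion_ball_nat_succ, Measure.restrict_univ, hf]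
    exact (monotone_nat_of_le_succ fun n => ball_subset_ball (by push_cast; linarith)).directed_le
  calc ⊤ = (⨆ n : ℕ, ∫⁻ y in ball x (n + 1), ENNReal.ofReal |f y| ∂μ) / μ univ := by
        rw [hballs, top_div_of_ne_top (measure_ne_top μ univ)]
    _ = ⨆ n : ℕ, (∫⁻ y in ball x (n + 1), ENNReal.ofReal |f y| ∂μ) / μ univ := iSup_div ..
    _ ≤ centeredMaximal μ f x := iSup_le fun n => le_iSup₂_of_le ((n : ℝ) + 1) (by positivity)
        (ENNReal.div_le_div_left (measure_mono (subset_univ _)) _)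

theorem noncenteredMaximal_lt_top_of_forall_ball {x : X} {r₀ : ℝ} {K δ : ℝ≥0∞} (hK : K ≠ ⊤)
    (hδ : δ ≠ 0) (hf : ∫⁻ y, ENNReal.ofReal |f y| ∂μ ≠ ⊤)
    (hsmall : ∀ c r, x ∈ ball c r → r < r₀ →
      ∫⁻ y in ball c r, ENNReal.ofReal |f y| ∂μ ≤ K * μ (ball c r))
    (hlarge : ∀ c r, x ∈ ball c r → r₀ ≤ r → δ ≤ μ (ball c r)) :
    noncenteredMaximal μ f x < ⊤ := by
  have hbound : noncenteredMaximal μ f x ≤ max K ((∫⁻ y, ENNReal.ofReal |f y| ∂μ) / δ) := by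
    refine iSup_le fun c => iSup_le fun r => iSup₂_le fun _ hx => ?_
    rcases lt_or_ge r r₀ with hr | hr
    · exact (div_le_of_le_mul (hsmall c r hx hr)).trans (le_max_left _ _)
    · exact (ENNReal.div_le_div (setLIntegral_le_lintegral _ _) (hlarge c r hx hr)).trans
        (le_max_right _ _)
  exact hbound.trans_lt (max_lt hK.lt_top (div_lt_top hf hδ))

theorem comparableOnBoundedSets_withDensity (ν : Measure X) {w : X → ℝ} (x₀ : X)
    (hw : ∀ n : ℕ, ∃ c C : ℝ, 0 < c ∧ ∀ x ∈ ball x₀ n, c ≤ w x ∧ w x ≤ C) :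
    ComparableOnBoundedSets (ν.withDensity fun x => ENNReal.ofReal (w x)) ν := by
  intro K hK
  obtain ⟨R, hKR⟩ := (isBounded_iff_subset_ball x₀).1 hK
  obtain ⟨n, hn⟩ := exists_nat_gt R
  obtain ⟨c, C, hc, hcC⟩ := hw n
  have hKn : K ⊆ ball x₀ n := hKR.trans (ball_subset_ball hn.le)
  refine ⟨c.toNNReal, C.toNNReal, Real.toNNReal_pos.2 hc, fun s hsK hs => ?_⟩
  rw [withDensity_apply _ hs, ← setLIntegral_const, ← setLIntegral_const]
  exact ⟨setLIntegral_mono' hs fun x hx => ENNReal.ofReal_le_ofReal (hcC x (hKn (hsK hx))).1,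
    setLIntegral_mono' hs fun x hx => ENNReal.ofReal_le_ofReal (hcC x (hKn (hsK hx))).2⟩

end PseudoMetricSpace

theorem exists_mem_closedBall_ball_subset_ball {E : Type*} [NormedAddCommGroup E]
    [NormedSpace ℝ E] {x c : E} {r s : ℝ} (hx : x ∈ ball c r) (hs : 0 ≤ s) (hsr : s ≤ r) :
    ∃ y ∈ closedBall x s, ball y s ⊆ ball c r := by
  have hr : 0 < r := pos_of_mem_ball hx
  have hxc : dist x c ≤ r := (mem_ball.1 hx).le
  have ht : s / r ≤ 1 := div_le_one_of_le₀ hsr hr.le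
  refine ⟨AffineMap.lineMap x c (s / r), ?_, ball_subset_ball' ?_⟩
  · rw [mem_closedBall, dist_lineMap_left, Real.norm_of_nonneg (by positivity)]
    calc s / r * dist x c ≤ s / r * r := by gcongr
      _ = s := div_mul_cancel₀ _ hr.ne'
  · rw [dist_lineMap_right, Real.norm_of_nonneg (sub_nonneg.2 ht)]
    calc s + (1 - s / r) * dist x c ≤ s + (1 - s / r) * r := by gcongr
      _ = r := by field_simp; ring

namespace ComparableOnBoundedSets

variable {E : Type*} [NormedAddCommGroup E] [NormedSpace ℝ E]
  [MeasurableSpace E] [BorelSpace E] {μ ν : Measure E} [ν.IsAddHaarMeasure]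

theorem exists_le_measure_ball (h : ComparableOnBoundedSets μ ν) (x : E) {R : ℝ} (hR : 0 < R) :
    ∃ δ ≠ 0, ∀ c r, x ∈ ball c r → R ≤ r → δ ≤ μ (ball c r) := by
  obtain ⟨a, b, ha, hab⟩ := h (ball x (2 * R)) isBounded_ball
  refine ⟨a * ν (ball 0 R), mul_ne_zero (by simp [ha.ne']) (measure_ball_pos ν 0 hR).ne',
    fun c r hx hRr => ?_⟩
  obtain ⟨y, hyx, hyc⟩ := exists_mem_closedBall_ball_subset_ball hx hR.le hRr
  have hy : ball y R ⊆ ball x (2 * R) := ball_subset_ball' (by linarith [mem_closedBall.1 hyx])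
  calc a * ν (ball 0 R) = a * ν (ball y R) := by rw [Measure.addHaar_ball_center ν y]
    _ ≤ μ (ball y R) := (hab _ hy measurableSet_ball).1
    _ ≤ μ (ball c r) := measure_mono hyc

variable [FiniteDimensional ℝ E]

theorem exists_measure_closedBall_le (h : ComparableOnBoundedSets μ ν) (x : E) (R : ℝ) :
    ∃ D ≠ ⊤, ∀ c r, x ∈ ball c r → r ≤ R → μ (closedBall x (2 * r)) ≤ D * μ (ball c r) := by
  obtain ⟨a, b, ha, hab⟩ := h (ball x (3 * R)) isBounded_ball
  refine ⟨b * ENNReal.ofReal (3 ^ Module.finrank ℝ E) / a, by finiteness, fun c r hx hrR => ?_⟩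
  have hr : 0 < r := pos_of_mem_ball hx
  have hcx : dist c x < r := by rw [dist_comm]; exact hx
  have h3 : ball x (3 * r) ⊆ ball x (3 * R) := ball_subset_ball (by linarith)
  have hc : ball c r ⊆ ball x (3 * R) := ball_subset_ball' (by linarith)
  calc μ (closedBall x (2 * r)) ≤ μ (ball x (3 * r)) :=
        measure_mono (closedBall_subset_ball (by linarith))
    _ ≤ b * ν (ball x (3 * r)) := (hab _ h3 measurableSet_ball).2
    _ = b * ENNReal.ofReal (3 ^ Module.finrank ℝ E) * ν (ball c r) := by
        rw [Measure.addHaar_ball_mul_of_pos ν x (by norm_num : (0 : ℝ) < 3),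
          ← Measure.addHaar_ball_center ν c, mul_assoc]
    _ ≤ b * ENNReal.ofReal (3 ^ Module.finrank ℝ E) * (μ (ball c r) / a) := by
        gcongr
        rw [ENNReal.le_div_iff_mul_le (by simp [ha.ne']) (by simp), mul_comm]
        exact (hab _ hc measurableSet_ball).1
    _ = b * ENNReal.ofReal (3 ^ Module.finrank ℝ E) / a * μ (ball c r) := by
        rw [← mul_div_assoc, ENNReal.mul_div_right_comm]

theorem noncenteredMaximal_lt_top (h : ComparableOnBoundedSets μ ν) {f : E → ℝ}
    (hf : ∫⁻ y, ENNReal.ofReal |f y| ∂μ ≠ ⊤) {x : E} {L : ℝ≥0∞} (hL : L ≠ ⊤)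
    (hx : ∀ᶠ r in 𝓝[>] 0, μ.withDensity (fun y => ENNReal.ofReal |f y|) (closedBall x r) /
      μ (closedBall x r) < L) :
    noncenteredMaximal μ f x < ⊤ := by
  obtain ⟨r₁, hr₁, hL₁⟩ := mem_nhdsGT_iff_exists_Ioo_subset.1 hx
  obtain ⟨D, hD, hdoubling⟩ := h.exists_measure_closedBall_le x (r₁ / 2)
  obtain ⟨δ, hδ, hlarge⟩ := h.exists_le_measure_ball x (half_pos hr₁)
  refine noncenteredMaximal_lt_top_of_forall_ball (mul_ne_top hL hD) hδ hf
    (fun c r hxc hr => ?_) hlarge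
  have hr0 : 0 < r := pos_of_mem_ball hxc
  have hsub : ball c r ⊆ closedBall x (2 * r) :=
    (ball_subset_ball' (by rw [dist_comm]; linarith [mem_ball.1 hxc])).trans ball_subset_closedBall
  have hratio := hL₁ (show 2 * r ∈ Ioo 0 r₁ from ⟨by positivity, by linarith⟩)
  calc ∫⁻ y in ball c r, ENNReal.ofReal |f y| ∂μ
      ≤ μ.withDensity (fun y => ENNReal.ofReal |f y|) (closedBall x (2 * r)) := by
        rw [withDensity_apply _ measurableSet_closedBall]
        exact lintegral_mono_set hsub
    _ ≤ L * μ (closedBall x (2 * r)) :=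
        (ENNReal.div_le_iff_le_mul (Or.inr hL) (Or.inr (ne_bot_of_gt hratio))).1 hratio.le
    _ ≤ L * (D * μ (ball c r)) := by gcongr; exact hdoubling c r hxc hr.le
    _ = L * D * μ (ball c r) := (mul_assoc _ _ _).symm

theorem measure_noncenteredMaximal_eq_top [IsLocallyFiniteMeasure μ]
    (h : ComparableOnBoundedSets μ ν) {f : E → ℝ} (hf : ∫⁻ y, ENNReal.ofReal |f y| ∂μ ≠ ⊤) :
    μ {x | noncenteredMaximal μ f x = ⊤} = 0 := by
  set ρ := μ.withDensity fun y => ENNReal.ofReal |f y|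
  have : IsFiniteMeasure ρ := isFiniteMeasure_withDensity hf
  have hae : ∀ᵐ x ∂μ, noncenteredMaximal μ f x ≠ ⊤ := by
    filter_upwards [Besicovitch.ae_tendsto_rnDeriv ρ μ, ρ.rnDeriv_lt_top μ] with x hx hρx
    exact (h.noncenteredMaximal_lt_top hf (add_ne_top.2 ⟨hρx.ne, one_ne_top⟩)
      (hx.eventually_lt_const (lt_add_right hρx.ne one_ne_zero))).ne
  simpa using ae_iff.1 hae

theorem noncenteredMaximal_dichotomy [IsFiniteMeasure μ] (h : ComparableOnBoundedSets μ ν)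
    (f : E → ℝ) :
    μ {x | noncenteredMaximal μ f x = ⊤} = 0 ∨ {x | noncenteredMaximal μ f x = ⊤} = univ := by
  rcases eq_or_ne (∫⁻ y, ENNReal.ofReal |f y| ∂μ) ⊤ with hf | hf
  · exact Or.inr (eq_univ_of_forall fun x =>
      eq_top_mono (centeredMaximal_le_noncenteredMaximal x) (centeredMaximal_eq_top hf x))
  · exact Or.inl (h.measure_noncenteredMaximal_eq_top hf)

theorem centeredMaximal_dichotomy [IsFiniteMeasure μ] (h : ComparableOnBoundedSets μ ν)
    (f : E → ℝ) :
    μ {x | centeredMaximal μ f x = ⊤} = 0 ∨ {x | centeredMaximal μ f x = ⊤} = univ := by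
  rcases eq_or_ne (∫⁻ y, ENNReal.ofReal |f y| ∂μ) ⊤ with hf | hf
  · exact Or.inr (eq_univ_of_forall (centeredMaximal_eq_top hf))
  · exact Or.inl (measure_mono_null (fun x hx => eq_top_mono
      (centeredMaximal_le_noncenteredMaximal x) hx) (h.measure_noncenteredMaximal_eq_top hf))

end ComparableOnBoundedSets

theorem dichotomy_finite_weighted_general (d : ℕ)
    (w : EuclideanSpace ℝ (Fin d) → ℝ)
    (μ : Measure (EuclideanSpace ℝ (Fin d)))
    (hμ : μ = volume.withDensity (fun x => ENNReal.ofReal (w x)))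
    (hfin : μ Set.univ < ⊤)
    (hbd : ∀ n : ℕ, ∃ c C : ℝ, 0 < c ∧ c ≤ C ∧
      ∀ x ∈ Metric.ball (0 : EuclideanSpace ℝ (Fin d)) (n : ℝ), c ≤ w x ∧ w x ≤ C) :
    (∀ f : EuclideanSpace ℝ (Fin d) → ℝ, LocallyIntegrableBall μ f →
      μ {x | noncenteredMaximal μ f x = ⊤} = 0 ∨
        {x | noncenteredMaximal μ f x = ⊤} = Set.univ) ∧
    (∀ f : EuclideanSpace ℝ (Fin d) → ℝ, LocallyIntegrableBall μ f →
      μ {x | centeredMaximal μ f x = ⊤} = 0 ∨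
        {x | centeredMaximal μ f x = ⊤} = Set.univ) := by
  have : IsFiniteMeasure μ := ⟨hfin⟩
  have hμν : ComparableOnBoundedSets μ volume := hμ ▸ comparableOnBoundedSets_withDensity volume 0
    fun n => (hbd n).imp fun _ ⟨C, hc, _, hcC⟩ => ⟨C, hc, hcC⟩
  exact ⟨fun f _ => hμν.noncenteredMaximal_dichotomy f,
    fun f _ => hμν.centeredMaximal_dichotomy f⟩

/-- Let `μ = w dx` be a finite measure on `ℝ^d` with a strictly positive
weight `w` that is bounded above and bounded away from `0` on each ball `B_n(0)`. Then
both the non-centered and the centered maximal operators possess the dichotomy property. -/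
theorem dichotomy_finite_weighted (d : ℕ) (hd : 1 ≤ d)
    (w : EuclideanSpace ℝ (Fin d) → ℝ) (hw : ∀ x, 0 < w x)
    (μ : Measure (EuclideanSpace ℝ (Fin d)))
    (hμ : μ = volume.withDensity (fun x => ENNReal.ofReal (w x)))
    (hfin : μ Set.univ < ⊤)
    (hbd : ∀ n : ℕ, ∃ c C : ℝ, 0 < c ∧ c ≤ C ∧
      ∀ x ∈ Metric.ball (0 : EuclideanSpace ℝ (Fin d)) (n : ℝ), c ≤ w x ∧ w x ≤ C) :
    (∀ f : EuclideanSpace ℝ (Fin d) → ℝ, LocallyIntegrableBall μ f →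
      μ {x | noncenteredMaximal μ f x = ⊤} = 0 ∨
        {x | noncenteredMaximal μ f x = ⊤} = Set.univ) ∧
    (∀ f : EuclideanSpace ℝ (Fin d) → ℝ, LocallyIntegrableBall μ f →
      μ {x | centeredMaximal μ f x = ⊤} = 0 ∨
        {x | centeredMaximal μ f x = ⊤} = Set.univ) :=
  dichotomy_finite_weighted_general d w μ hμ hfin hbd
end

section
/- Let μ be an arbitrary Borel measure on ℝ² (with the Euclidean metric) satisfying 0 < μ(B) < ∞ for every open ball B, and assume that for the point (0,0) condition (C) fails, i.e. limsup_{r→∞} μ(B_{r+1}(0,0))/μ(B_r(0,0)) = ∞. Then there exists f ∈ L¹_loc(μ) and points x₀, x₁ ∈ ℝ² such that M^c f(x₀) = ∞ on a set of positive μ-measure while M^c f(x₁) < ∞; in particular, M^c does not possess the dichotomy property. -/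
open MeasureTheory Metric Filter Set ENNReal

/-!
Failure of (C) gives radii `r k`, as sparse as we like, such that the shell
`B(0, r k + 1) \ B(0, r k)` carries at least `k 2ᵏ μ(B(0, r k))`; by pigeonhole, for infinitely
many `k` a fixed fraction of that mass lies in one `60°`-sector around a direction `e`. Put a unit
ball `C k` at `-(r k - 2) e`, just inside `B(0, r k)`, and let `f` take the constant value on
`C k` for which `∫_{C k} f = k μ(B(0, r k))`. Around every `x` near `0`, the ball of radius
`r k - 1/2` contains `C k` and lies in `B(0, r k)`, so `M f x ≥ k` for all `k`. A ball around
`4 e` that reaches `C k`, on the opposite side of the origin, contains the heavy sector of the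
`k`-th shell, which outweighs the contribution of `C k` by `2ᵏ`; hence `M f (4 e) ≤ 2`.
-/

open Function
open scoped InnerProductSpace

section Sector

variable {E : Type*} [NormedAddCommGroup E] [InnerProductSpace ℝ E]

/-- The closed cone of vectors making an angle of at most `60°` with `e`. -/
def sector (e : E) : Set E := {w | ‖w‖ ≤ 2 * ⟪w, e⟫_ℝ}

theorem norm_sub_smul_le_of_mem_sector {e w : E} (he : ‖e‖ = 1) (hw : w ∈ sector e) {s : ℝ}
    (hs : 0 ≤ s) (hsw : s ≤ ‖w‖) : ‖w - s • e‖ ≤ ‖w‖ := by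
  have hw' : ‖w‖ ≤ 2 * ⟪w, e⟫_ℝ := hw
  have hsq : ‖w - s • e‖ ^ 2 ≤ ‖w‖ ^ 2 := by
    rw [norm_sub_sq_real, real_inner_smul_right, norm_smul, he, Real.norm_of_nonneg hs]
    nlinarith
  exact pow_le_pow_iff_left₀ (norm_nonneg _) (norm_nonneg _) two_ne_zero |>.mp hsq

theorem EuclideanSpace.exists_mem_sector_single {n : ℕ} [NeZero n] (hn : n ≤ 4)
    (w : EuclideanSpace ℝ (Fin n)) :
    ∃ p : Fin n × Bool, w ∈ sector (EuclideanSpace.single p.1 (if p.2 then 1 else -1 : ℝ)) := by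
  obtain ⟨i, -, hi⟩ := Finset.exists_max_image Finset.univ (fun j => |w j|) Finset.univ_nonempty
  have hnorm : ‖w‖ ≤ 2 * |w i| := by
    refine pow_le_pow_iff_left₀ (norm_nonneg _) (by positivity) two_ne_zero |>.mp ?_
    calc ‖w‖ ^ 2 = ∑ j, |w j| ^ 2 := by simp [EuclideanSpace.real_norm_sq_eq]
      _ ≤ ∑ _j : Fin n, |w i| ^ 2 :=
        Finset.sum_le_sum fun j hj => pow_le_pow_left₀ (abs_nonneg _) (hi j hj) 2
      _ = n * |w i| ^ 2 := by simp
      _ ≤ (2 * |w i|) ^ 2 := by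
        have : (n : ℝ) ≤ 4 := by exact_mod_cast hn
        nlinarith [sq_nonneg |w i|]
  refine ⟨(i, decide (0 ≤ w i)), ?_⟩
  rcases le_or_gt 0 (w i) with h | h
  · simpa [sector, EuclideanSpace.inner_single_right, h, abs_of_nonneg h] using hnorm
  · simpa [sector, EuclideanSpace.inner_single_right, h.not_ge, abs_of_neg h] using hnorm

end Sector

theorem Filter.exists_forall_frequently_and {α β ι : Type*} [Preorder β] [IsDirectedOrder β]
    [Nonempty β] [Finite ι] {l : Filter α} {p : β → α → Prop} (hp : ∀ n, ∃ᶠ x in l, p n x)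
    (hanti : Antitone p) {q : ι → α → Prop} (hq : ∀ x, ∃ i, q i x) :
    ∃ i, ∀ n, ∃ᶠ x in l, p n x ∧ q i x := by
  by_contra! h
  choose N hN using h
  obtain ⟨n, hn⟩ := Finite.exists_le N
  obtain ⟨x, hpx, hx⟩ := ((hp n).and_eventually (eventually_all.2 hN)).exists
  obtain ⟨i, hi⟩ := hq x
  exact hx i (hanti (hn i) x hpx) hi

theorem Filter.exists_seq_forall_of_frequently_atTop {α : Type*} [SemilatticeSup α] [Nonempty α]
    {p : ℕ → α → Prop} (hp : ∀ n, ∃ᶠ x in atTop, p n x) (a : α) (next : α → α) :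
    ∃ r : ℕ → α, a ≤ r 0 ∧ (∀ k, next (r k) ≤ r (k + 1)) ∧ ∀ k, p k (r k) := by
  choose pick hpick_ge hpick using fun n b => frequently_atTop.1 (hp n) b
  refine ⟨fun k => Nat.rec (pick 0 a) (fun k rk => pick (k + 1) (next rk)) k,
    hpick_ge 0 a, fun k => hpick_ge (k + 1) _, fun k => ?_⟩
  cases k with
  | zero => exact hpick 0 a
  | succ k => exact hpick (k + 1) _

theorem frequently_natCast_mul_measure_ball_le_measure_shell {X : Type*} [PseudoMetricSpace X]
    [MeasurableSpace X] [OpensMeasurableSpace X] {μ : Measure X} {x : X}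
    (hfin : ∀ r, μ (ball x r) ≠ ⊤)
    (h : limsup (fun r : ℝ => μ (ball x (r + 1)) / μ (ball x r)) atTop = ⊤) (n : ℕ) :
    ∃ᶠ r in atTop, n * μ (ball x r) ≤ μ (ball x (r + 1) \ ball x r) := by
  have hlt : ((n + 1 : ℕ) : ℝ≥0∞) < limsup (fun r : ℝ => μ (ball x (r + 1)) / μ (ball x r)) atTop :=
    h ▸ ENNReal.natCast_lt_top _
  refine (frequently_lt_of_lt_limsup (by isBoundedDefault) hlt).mono fun r hr => ?_
  rw [measure_sdiff (ball_subset_ball (by linarith)) measurableSet_ball.nullMeasurableSet (hfin r)]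
  refine ENNReal.le_sub_of_add_le_right (hfin r) ?_
  calc n * μ (ball x r) + μ (ball x r) = (n + 1 : ℕ) * μ (ball x r) := by push_cast; ring
    _ ≤ μ (ball x (r + 1)) := (ENNReal.mul_lt_of_lt_div hr).le

theorem exists_measure_le_card_mul_measure_inter {α ι : Type*} [MeasurableSpace α]
    (μ : Measure α) [Fintype ι] [Nonempty ι] {S : ι → Set α} (hS : ∀ x, ∃ i, x ∈ S i)
    (A : Set α) : ∃ i, μ A ≤ Fintype.card ι * μ (S i ∩ A) := by
  obtain ⟨i, -, hi⟩ :=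
    Finset.exists_max_image Finset.univ (fun i => μ (S i ∩ A)) Finset.univ_nonempty
  refine ⟨i, ?_⟩
  calc μ A ≤ μ (⋃ j, S j ∩ A) :=
        measure_mono fun x hx => mem_iUnion.2 ((hS x).imp fun j hj => ⟨hj, hx⟩)
    _ ≤ ∑ j, μ (S j ∩ A) := measure_iUnion_fintype_le μ _
    _ ≤ ∑ _j : ι, μ (S i ∩ A) := Finset.sum_le_sum hi
    _ = Fintype.card ι * μ (S i ∩ A) := by simp

theorem ofReal_abs_tsum_indicator {X ι : Type*} {C : ι → Set X} (hC : Pairwise (Disjoint on C))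
    {a : ι → ℝ} (ha : ∀ k, 0 ≤ a k) (y : X) :
    ENNReal.ofReal |∑' k, (C k).indicator (fun _ => a k) y| =
      ∑' k, (C k).indicator (fun _ => ENNReal.ofReal (a k)) y := by
  by_cases hy : ∃ k, y ∈ C k
  · obtain ⟨k, hk⟩ := hy
    have hnot : ∀ l ≠ k, y ∉ C l := fun l hl hyl => Set.disjoint_left.1 (hC hl) hyl hk
    rw [tsum_eq_single k fun l hl => indicator_of_notMem (hnot l hl) _,
      tsum_eq_single k fun l hl => indicator_of_notMem (hnot l hl) _]
    simp [hk, abs_of_nonneg (ha k)]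
  · simp only [not_exists] at hy
    simp [indicator_of_notMem (hy _)]

theorem setLIntegral_ofReal_abs_tsum_indicator {X ι : Type*} [MeasurableSpace X] [Countable ι]
    (μ : Measure X) {C : ι → Set X} (hC : Pairwise (Disjoint on C))
    (hCm : ∀ k, MeasurableSet (C k)) {a : ι → ℝ} (ha : ∀ k, 0 ≤ a k) (s : Set X) :
    ∫⁻ y in s, ENNReal.ofReal |∑' k, (C k).indicator (fun _ => a k) y| ∂μ =
      ∑' k, ENNReal.ofReal (a k) * μ (C k ∩ s) := by
  simp_rw [ofReal_abs_tsum_indicator hC ha]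
  rw [lintegral_tsum fun k => (measurable_const.indicator (hCm k)).aemeasurable]
  refine tsum_congr fun k => ?_
  rw [lintegral_indicator_const (hCm k), Measure.restrict_apply (hCm k)]

section Maximal

variable {X : Type*} [MeasurableSpace X] [PseudoMetricSpace X] {μ : Measure X} {f : X → ℝ} {x : X}

theorem le_centeredMaximal {ρ : ℝ} (hρ : 0 < ρ) :
    (∫⁻ y in ball x ρ, ENNReal.ofReal |f y| ∂μ) / μ (ball x ρ) ≤ centeredMaximal μ f x :=
  le_iSup₂ (f := fun ρ (_ : 0 < ρ) => (∫⁻ y in ball x ρ, ENNReal.ofReal |f y| ∂μ) / μ (ball x ρ))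
    ρ hρ

theorem centeredMaximal_le_of_forall_le_mul {c : ℝ≥0∞}
    (h : ∀ ρ, 0 < ρ → ∫⁻ y in ball x ρ, ENNReal.ofReal |f y| ∂μ ≤ c * μ (ball x ρ)) :
    centeredMaximal μ f x ≤ c :=
  iSup₂_le fun ρ hρ => ENNReal.div_le_of_le_mul (h ρ hρ)

end Maximal

theorem add_two_mul_le_of_add_two_le {r : ℕ → ℝ} (hr : ∀ k, r k + 2 ≤ r (k + 1)) (k n : ℕ) :
    r k + 2 * n ≤ r (k + n) := by
  induction n with
  | zero => simp
  | succ n ih => rw [← add_assoc]; push_cast; linarith [hr (k + n)]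

theorem four_add_two_mul_le {r : ℕ → ℝ} (hr : ∀ k, r k + 2 ≤ r (k + 1)) (hr0 : 4 ≤ r 0)
    (k : ℕ) : 4 + 2 * k ≤ r k := by
  simpa using (add_le_add_left hr0 _).trans (add_two_mul_le_of_add_two_le hr 0 k)

noncomputable section Bumps

variable {E : Type*} [NormedAddCommGroup E] [InnerProductSpace ℝ E]

def bump (e : E) (r : ℕ → ℝ) (k : ℕ) : Set E := ball (-(r k - 2) • e) 1

variable {e : E} {r : ℕ → ℝ}

theorem dist_smul_smul_of_norm_eq_one (he : ‖e‖ = 1) (a b : ℝ) :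
    dist (a • e) (b • e) = |a - b| := by
  rw [dist_eq_norm, ← sub_smul, norm_smul, he, mul_one, Real.norm_eq_abs]

theorem bump_pairwise_disjoint (he : ‖e‖ = 1) (hr : ∀ k, r k + 2 ≤ r (k + 1)) :
    Pairwise (Disjoint on bump e r) := by
  refine (pairwise_disjoint_on _).2 fun k l hkl => ball_disjoint_ball ?_
  obtain ⟨n, rfl⟩ := Nat.exists_eq_add_of_lt hkl
  have := add_two_mul_le_of_add_two_le hr k (n + 1)
  have hn : (0 : ℝ) ≤ n := n.cast_nonneg
  rw [← add_assoc] at this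
  push_cast at this
  rw [dist_smul_smul_of_norm_eq_one he, abs_of_nonneg (by linarith)]
  linarith

variable [MeasurableSpace E]

def bumpHeight (μ : Measure E) (e : E) (r : ℕ → ℝ) (k : ℕ) : ℝ :=
  k * (μ (ball 0 (r k))).toReal / (μ (bump e r k)).toReal

def bumpSum (μ : Measure E) (e : E) (r : ℕ → ℝ) (y : E) : ℝ :=
  ∑' k, (bump e r k).indicator (fun _ => bumpHeight μ e r k) y

variable {μ : Measure E}

theorem ofReal_bumpHeight_mul_measure_bump
    (hμ : ∀ (c : E) (ρ : ℝ), 0 < ρ → 0 < μ (ball c ρ) ∧ μ (ball c ρ) < ⊤) {k : ℕ}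
    (hrk : 0 < r k) :
    ENNReal.ofReal (bumpHeight μ e r k) * μ (bump e r k) = k * μ (ball 0 (r k)) := by
  obtain ⟨hpos, hfin⟩ : 0 < μ (bump e r k) ∧ μ (bump e r k) < ⊤ := hμ _ 1 one_pos
  rw [bumpHeight, ENNReal.ofReal_div_of_pos (ENNReal.toReal_pos hpos.ne' hfin.ne),
    ENNReal.ofReal_mul (Nat.cast_nonneg k), ENNReal.ofReal_natCast,
    ENNReal.ofReal_toReal (hμ 0 _ hrk).2.ne, ENNReal.ofReal_toReal hfin.ne,
    ENNReal.div_mul_cancel hpos.ne' hfin.ne]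

theorem ofReal_bumpHeight_mul_measure_inter_ball_le
    (hμ : ∀ (c : E) (ρ : ℝ), 0 < ρ → 0 < μ (ball c ρ) ∧ μ (ball c ρ) < ⊤) (he : ‖e‖ = 1)
    (hr : ∀ k, r k + 2 ≤ r (k + 1)) (hr0 : 4 ≤ r 0) {k : ℕ}
    (hheavy : 2 ^ k * (k * μ (ball 0 (r k))) ≤
      μ (sector e ∩ (ball 0 (r k + 1) \ ball 0 (r k)))) (ρ : ℝ) :
    ENNReal.ofReal (bumpHeight μ e r k) * μ (bump e r k ∩ ball ((4 : ℝ) • e) ρ) ≤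
      2⁻¹ ^ k * μ (ball ((4 : ℝ) • e) ρ) := by
  rcases (bump e r k ∩ ball ((4 : ℝ) • e) ρ).eq_empty_or_nonempty with h0 | ⟨y, hyk, hyρ⟩
  · simp [h0]
  have hrk : 4 ≤ r k := by linarith [four_add_two_mul_le hr hr0 k, k.cast_nonneg (α := ℝ)]
  have hρ : r k + 1 < ρ := by
    have := dist_triangle ((4 : ℝ) • e) y (-(r k - 2) • e)
    rw [dist_smul_smul_of_norm_eq_one he, abs_of_nonneg (by linarith), dist_comm] at this
    linarith [mem_ball.1 hyk, mem_ball.1 hyρ]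
  have hshell : sector e ∩ (ball 0 (r k + 1) \ ball 0 (r k)) ⊆ ball ((4 : ℝ) • e) ρ := by
    rintro w ⟨hw, hw₁, hw₂⟩
    rw [mem_ball_zero_iff] at hw₁
    rw [mem_ball_zero_iff, not_lt] at hw₂
    rw [mem_ball, dist_eq_norm]
    linarith [norm_sub_smul_le_of_mem_sector he hw (by norm_num) (hrk.trans hw₂)]
  calc ENNReal.ofReal (bumpHeight μ e r k) * μ (bump e r k ∩ ball ((4 : ℝ) • e) ρ)
      ≤ ENNReal.ofReal (bumpHeight μ e r k) * μ (bump e r k) := by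
        gcongr; exact inter_subset_left
    _ = 2⁻¹ ^ k * (2 ^ k * (k * μ (ball 0 (r k)))) := by
        rw [ofReal_bumpHeight_mul_measure_bump hμ (by linarith), ← mul_assoc, ← mul_pow,
          ENNReal.inv_mul_cancel two_ne_zero ENNReal.ofNat_ne_top, one_pow, one_mul]
    _ ≤ 2⁻¹ ^ k * μ (ball ((4 : ℝ) • e) ρ) := by
        gcongr
        exact hheavy.trans (measure_mono hshell)

variable [OpensMeasurableSpace E]

theorem setLIntegral_bumpSum (he : ‖e‖ = 1) (hr : ∀ k, r k + 2 ≤ r (k + 1)) (s : Set E) :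
    ∫⁻ y in s, ENNReal.ofReal |bumpSum μ e r y| ∂μ =
      ∑' k, ENNReal.ofReal (bumpHeight μ e r k) * μ (bump e r k ∩ s) :=
  setLIntegral_ofReal_abs_tsum_indicator μ (bump_pairwise_disjoint he hr)
    (fun _ => measurableSet_ball) (fun _ => by rw [bumpHeight]; positivity) s

theorem natCast_le_centeredMaximal_bumpSum
    (hμ : ∀ (c : E) (ρ : ℝ), 0 < ρ → 0 < μ (ball c ρ) ∧ μ (ball c ρ) < ⊤) (he : ‖e‖ = 1)
    (hr : ∀ k, r k + 2 ≤ r (k + 1)) (hr0 : 4 ≤ r 0) {x : E} (hx : ‖x‖ < 1 / 2) (k : ℕ) :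
    (k : ℝ≥0∞) ≤ centeredMaximal μ (bumpSum μ e r) x := by
  have hrk : 4 ≤ r k := by linarith [four_add_two_mul_le hr hr0 k, k.cast_nonneg (α := ℝ)]
  have hρ : 0 < r k - 1 / 2 := by linarith
  have hbump : bump e r k ⊆ ball x (r k - 1 / 2) := by
    refine ball_subset_ball' ?_
    have := dist_le_norm_add_norm (-(r k - 2) • e) x
    rw [norm_smul, he, mul_one, Real.norm_eq_abs, abs_neg, abs_of_nonneg (by linarith)] at this
    linarith
  have hball : ball x (r k - 1 / 2) ⊆ ball 0 (r k) :=
    ball_subset_ball' (by rw [dist_zero_right]; linarith)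
  obtain ⟨hpos, hfin⟩ := hμ x _ hρ
  refine le_trans ?_ (le_centeredMaximal hρ)
  rw [ENNReal.le_div_iff_mul_le (Or.inl hpos.ne') (Or.inl hfin.ne), setLIntegral_bumpSum he hr]
  calc (k : ℝ≥0∞) * μ (ball x (r k - 1 / 2)) ≤ k * μ (ball 0 (r k)) := by gcongr
    _ = ENNReal.ofReal (bumpHeight μ e r k) * μ (bump e r k ∩ ball x (r k - 1 / 2)) := by
      rw [inter_eq_left.2 hbump, ofReal_bumpHeight_mul_measure_bump hμ (by linarith)]
    _ ≤ _ := ENNReal.le_tsum k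

theorem centeredMaximal_bumpSum_eq_top
    (hμ : ∀ (c : E) (ρ : ℝ), 0 < ρ → 0 < μ (ball c ρ) ∧ μ (ball c ρ) < ⊤) (he : ‖e‖ = 1)
    (hr : ∀ k, r k + 2 ≤ r (k + 1)) (hr0 : 4 ≤ r 0) {x : E} (hx : ‖x‖ < 1 / 2) :
    centeredMaximal μ (bumpSum μ e r) x = ⊤ := by
  by_contra hne
  obtain ⟨k, hk⟩ := ENNReal.exists_nat_gt hne
  exact (natCast_le_centeredMaximal_bumpSum hμ he hr hr0 hx k).not_gt hk

theorem centeredMaximal_bumpSum_le_two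
    (hμ : ∀ (c : E) (ρ : ℝ), 0 < ρ → 0 < μ (ball c ρ) ∧ μ (ball c ρ) < ⊤) (he : ‖e‖ = 1)
    (hr : ∀ k, r k + 2 ≤ r (k + 1)) (hr0 : 4 ≤ r 0)
    (hheavy : ∀ k, 2 ^ k * (k * μ (ball 0 (r k))) ≤
      μ (sector e ∩ (ball 0 (r k + 1) \ ball 0 (r k)))) :
    centeredMaximal μ (bumpSum μ e r) ((4 : ℝ) • e) ≤ 2 := by
  refine centeredMaximal_le_of_forall_le_mul fun ρ _ => ?_
  rw [setLIntegral_bumpSum he hr]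
  calc ∑' k, ENNReal.ofReal (bumpHeight μ e r k) * μ (bump e r k ∩ ball ((4 : ℝ) • e) ρ)
      ≤ ∑' k : ℕ, 2⁻¹ ^ k * μ (ball ((4 : ℝ) • e) ρ) :=
        ENNReal.tsum_le_tsum fun k =>
          ofReal_bumpHeight_mul_measure_inter_ball_le hμ he hr hr0 (hheavy k) ρ
    _ = 2 * μ (ball ((4 : ℝ) • e) ρ) := by
        rw [ENNReal.tsum_mul_right, ENNReal.tsum_geometric, ENNReal.one_sub_inv_two, inv_inv]

theorem locallyIntegrableBall_bumpSum
    (hμ : ∀ (c : E) (ρ : ℝ), 0 < ρ → 0 < μ (ball c ρ) ∧ μ (ball c ρ) < ⊤) (he : ‖e‖ = 1)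
    (hr : ∀ k, r k + 2 ≤ r (k + 1)) (hr0 : 4 ≤ r 0) :
    LocallyIntegrableBall μ (bumpSum μ e r) := by
  intro c ρ hρ
  obtain ⟨N, hN⟩ := exists_nat_gt (‖c‖ + ρ)
  rw [setLIntegral_bumpSum he hr, tsum_eq_sum (s := Finset.range N) fun k hk => ?_]
  · exact ENNReal.sum_lt_top.2 fun k _ => ENNReal.mul_lt_top ENNReal.ofReal_lt_top
      ((measure_mono inter_subset_right).trans_lt (hμ c ρ hρ).2)
  have hkN : (N : ℝ) ≤ k := by exact_mod_cast not_lt.1 (Finset.mem_range.not.1 hk)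
  have hdisj : Disjoint (bump e r k) (ball c ρ) := by
    refine ball_disjoint_ball ?_
    have := norm_sub_norm_le (-(r k - 2) • e) c
    rw [norm_smul, he, mul_one, Real.norm_eq_abs, abs_neg,
      abs_of_nonneg (by linarith [four_add_two_mul_le hr hr0 k, k.cast_nonneg (α := ℝ)])] at this
    rw [dist_eq_norm]
    linarith [four_add_two_mul_le hr hr0 k]
  rw [hdisj.inter_eq, measure_empty, mul_zero]

end Bumps

section Construction

variable {E : Type*} [NormedAddCommGroup E] [InnerProductSpace ℝ E] [MeasurableSpace E]
  [OpensMeasurableSpace E] {μ : Measure E} {ι : Type*} [Fintype ι] {d : ι → E}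

theorem exists_radii_heavy_sector
    (hμ : ∀ (c : E) (ρ : ℝ), 0 < ρ → 0 < μ (ball c ρ) ∧ μ (ball c ρ) < ⊤)
    (hd : ∀ w, ∃ i, w ∈ sector (d i))
    (h : limsup (fun r : ℝ => μ (ball (0 : E) (r + 1)) / μ (ball 0 r)) atTop = ⊤) :
    ∃ i, ∃ r : ℕ → ℝ, 4 ≤ r 0 ∧ (∀ k, r k + 2 ≤ r (k + 1)) ∧ ∀ k,
      2 ^ k * (k * μ (ball 0 (r k))) ≤ μ (sector (d i) ∩ (ball 0 (r k + 1) \ ball 0 (r k))) := by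
  have : Nonempty ι := (hd 0).nonempty
  have hfin : ∀ ρ, μ (ball (0 : E) ρ) ≠ ⊤ := fun ρ =>
    ((measure_mono (ball_subset_ball (le_max_left ρ 1))).trans_lt
      (hμ 0 _ (lt_max_of_lt_right one_pos)).2).ne
  obtain ⟨i, hi⟩ := Filter.exists_forall_frequently_and
    (frequently_natCast_mul_measure_ball_le_measure_shell hfin h)
    (fun m n hmn r hr => le_trans (by gcongr) hr)
    (fun r => exists_measure_le_card_mul_measure_inter μ hd (ball 0 (r + 1) \ ball 0 r))
  obtain ⟨r, hr0, hr, hrk⟩ := Filter.exists_seq_forall_of_frequently_atTop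
    (fun k => hi (Fintype.card ι * (2 ^ k * k))) 4 (· + 2)
  refine ⟨i, r, hr0, hr, fun k => ?_⟩
  have hcard : (Fintype.card ι : ℝ≥0∞) ≠ 0 := by simp [Fintype.card_ne_zero]
  refine (ENNReal.mul_le_mul_iff_right hcard (ENNReal.natCast_ne_top _)).1 ?_
  calc (Fintype.card ι : ℝ≥0∞) * (2 ^ k * (k * μ (ball 0 (r k))))
      = ((Fintype.card ι * (2 ^ k * k) : ℕ) : ℝ≥0∞) * μ (ball 0 (r k)) := by push_cast; ring
    _ ≤ _ := (hrk k).1.trans (hrk k).2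

theorem exists_centeredMaximal_eq_top_on_ball_and_lt_top
    (hμ : ∀ (c : E) (ρ : ℝ), 0 < ρ → 0 < μ (ball c ρ) ∧ μ (ball c ρ) < ⊤)
    (hd₁ : ∀ i, ‖d i‖ = 1) (hd : ∀ w, ∃ i, w ∈ sector (d i))
    (h : limsup (fun r : ℝ => μ (ball (0 : E) (r + 1)) / μ (ball 0 r)) atTop = ⊤) :
    ∃ f, LocallyIntegrableBall μ f ∧ (∀ x ∈ ball (0 : E) (1 / 2), centeredMaximal μ f x = ⊤) ∧
      ∃ x₁, centeredMaximal μ f x₁ < ⊤ := by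
  obtain ⟨i, r, hr0, hr, hheavy⟩ := exists_radii_heavy_sector hμ hd h
  exact ⟨bumpSum μ (d i) r, locallyIntegrableBall_bumpSum hμ (hd₁ i) hr hr0,
    fun x hx => centeredMaximal_bumpSum_eq_top hμ (hd₁ i) hr hr0 (mem_ball_zero_iff.1 hx),
    (4 : ℝ) • d i, (centeredMaximal_bumpSum_le_two hμ (hd₁ i) hr hr0 hheavy).trans_lt (by simp)⟩

end Construction

/-- If for a Borel measure `μ` on `ℝ²` (positive finite on balls) condition
(C) fails at the origin, i.e. `limsup_{r→∞} μ(B_{r+1}(0,0))/μ(B_r(0,0)) = ∞`, then there is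
`f ∈ L¹_loc(μ)` and points `x₀, x₁` with `M^c f(x₀) = ∞`, the set `{M^c f = ∞}` of positive
measure, and `M^c f(x₁) < ∞`; in particular `M^c` fails the dichotomy property. -/
theorem no_dichotomy_of_not_condC (μ : Measure (EuclideanSpace ℝ (Fin 2)))
    (hμ : ∀ (c : EuclideanSpace ℝ (Fin 2)) (r : ℝ), 0 < r →
      0 < μ (Metric.ball c r) ∧ μ (Metric.ball c r) < ⊤)
    (h : Filter.limsup (fun r : ℝ =>
        μ (Metric.ball (0 : EuclideanSpace ℝ (Fin 2)) (r + 1)) /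
          μ (Metric.ball (0 : EuclideanSpace ℝ (Fin 2)) r)) Filter.atTop = ⊤) :
    ∃ f : EuclideanSpace ℝ (Fin 2) → ℝ, LocallyIntegrableBall μ f ∧
      (∃ x₀, centeredMaximal μ f x₀ = ⊤) ∧
      0 < μ {x | centeredMaximal μ f x = ⊤} ∧
      (∃ x₁, centeredMaximal μ f x₁ < ⊤) ∧
      ¬ (μ {x | centeredMaximal μ f x = ⊤} = 0 ∨
          {x | centeredMaximal μ f x = ⊤} = Set.univ) := by
  obtain ⟨f, hloc, hblow, x₁, hx₁⟩ := exists_centeredMaximal_eq_top_on_ball_and_lt_top hμ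
    (d := fun p : Fin 2 × Bool => EuclideanSpace.single p.1 (if p.2 then 1 else -1))
    (fun p => by cases p.2 <;> simp) (EuclideanSpace.exists_mem_sector_single (by norm_num)) h
  have hpos : 0 < μ {x | centeredMaximal μ f x = ⊤} :=
    (hμ 0 (1 / 2) (by norm_num)).1.trans_le (measure_mono hblow)
  refine ⟨f, hloc, ⟨0, hblow 0 (mem_ball_self (by norm_num))⟩, hpos, ⟨x₁, hx₁⟩, ?_⟩
  rintro (hzero | huniv)
  · exact hpos.ne' hzero
  · exact hx₁.ne (huniv ▸ mem_univ x₁ : x₁ ∈ {x | centeredMaximal μ f x = ⊤})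
end

section
/- Let μ be the measure on ℝ with dμ(x) = e^{x²} dx, and let f(x) = x·χ_{(0,∞)}(x). Then the centered maximal function satisfies M^c f(x) < ∞ for every x < 0. Consequently, combined with M^c f = ∞ on [0,∞), the centered maximal operator M^c associated with (ℝ, d_e, e^{x²}dx) does not possess the dichotomy property. -/
open MeasureTheory Metric Filter Set ENNReal

/-!
For `x < 0` and a ball `B = (x - r, x + r)` whose right end `b = x + r` is positive,
`∫_B f dμ = (e^{b²} - 1)/2`, while the piece `(x - r, -r)` of `B`, of length `|x|`, already has
`μ`-measure at least `|x| e^{b²}`; so all averages of `f` over balls centred at `x` are at most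
`1/(2|x|)`. For `x ≥ 0` the ball `(x - r, x + r)` lies in `(-b, b)`, whose measure is at most
`2 e^{b²}/b` (compare `e^{y²}` with `e^{b y}` on `[0, b]`), so the averages grow like `b/8`.
Hence `M^c f = ∞` exactly on `[0, ∞)`, a set of positive but not full measure, although `f` is
locally integrable.
-/

open Real (exp)

theorem integral_mul_exp_sq (a b : ℝ) :
    ∫ y in a..b, y * exp (y ^ 2) = (exp (b ^ 2) - exp (a ^ 2)) / 2 := by
  have hderiv (y : ℝ) : HasDerivAt (fun y => exp (y ^ 2) / 2) (y * exp (y ^ 2)) y := by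
    refine (((hasDerivAt_pow 2 y).exp).div_const 2).congr_deriv ?_
    push_cast
    ring
  rw [intervalIntegral.integral_eq_sub_of_hasDerivAt (fun y _ => hderiv y)
    (by apply Continuous.intervalIntegrable; fun_prop)]
  ring

theorem integral_exp_sq_le {b : ℝ} (hb : 0 < b) :
    ∫ y in (0 : ℝ)..b, exp (y ^ 2) ≤ exp (b ^ 2) / b := by
  calc ∫ y in (0 : ℝ)..b, exp (y ^ 2)
      ≤ ∫ y in (0 : ℝ)..b, exp (b * y) := by
        refine intervalIntegral.integral_mono_on hb.le
          (by apply Continuous.intervalIntegrable; fun_prop)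
          (by apply Continuous.intervalIntegrable; fun_prop) fun y hy => ?_
        exact Real.exp_le_exp.2 (by nlinarith [hy.1, hy.2])
    _ = (exp (b ^ 2) - 1) / b := by
        rw [intervalIntegral.integral_comp_mul_left (fun y => exp y) hb.ne', integral_exp]
        simp [sq, div_eq_inv_mul]
    _ ≤ exp (b ^ 2) / b := by gcongr; linarith

theorem integral_exp_sq_symm_le {b : ℝ} (hb : 0 < b) :
    ∫ y in -b..b, exp (y ^ 2) ≤ 2 * exp (b ^ 2) / b := by
  have hsymm : ∫ y in -b..0, exp (y ^ 2) = ∫ y in (0 : ℝ)..b, exp (y ^ 2) := by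
    have := intervalIntegral.integral_comp_neg (a := 0) (b := b) fun y => exp (y ^ 2)
    simp only [neg_sq, neg_zero] at this
    exact this.symm
  rw [← intervalIntegral.integral_add_adjacent_intervals (b := 0)
    (by apply Continuous.intervalIntegrable; fun_prop)
    (by apply Continuous.intervalIntegrable; fun_prop), hsymm, mul_div_assoc]
  linarith [integral_exp_sq_le hb]

theorem mul_exp_le_integral_exp_sq {a b c : ℝ} (hab : a ≤ b) (hc : ∀ y ∈ Icc a b, c ≤ y ^ 2) :
    (b - a) * exp c ≤ ∫ y in a..b, exp (y ^ 2) := by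
  calc (b - a) * exp c = ∫ _ in a..b, exp c := by simp
    _ ≤ ∫ y in a..b, exp (y ^ 2) :=
      intervalIntegral.integral_mono_on hab intervalIntegrable_const
        (by apply Continuous.intervalIntegrable; fun_prop) fun y hy => Real.exp_le_exp.2 (hc y hy)

theorem integral_max_zero_mul_exp_sq_of_nonpos {a b : ℝ} (hab : a ≤ b) (hb : b ≤ 0) :
    ∫ y in a..b, max y 0 * exp (y ^ 2) = 0 := by
  refine (intervalIntegral.integral_congr fun y hy => ?_).trans intervalIntegral.integral_zero
  rw [uIcc_of_le hab] at hy
  simp [max_eq_right (hy.2.trans hb)]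

theorem integral_max_zero_mul_exp_sq {a b : ℝ} (ha : a ≤ 0) (hb : 0 ≤ b) :
    ∫ y in a..b, max y 0 * exp (y ^ 2) = (exp (b ^ 2) - 1) / 2 := by
  have hpos : ∫ y in (0 : ℝ)..b, max y 0 * exp (y ^ 2) = ∫ y in (0 : ℝ)..b, y * exp (y ^ 2) :=
    intervalIntegral.integral_congr fun y hy => by
      rw [uIcc_of_le hb] at hy
      simp [max_eq_left hy.1]
  rw [← intervalIntegral.integral_add_adjacent_intervals (b := 0)
    (by apply Continuous.intervalIntegrable; fun_prop)
    (by apply Continuous.intervalIntegrable; fun_prop),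
    integral_max_zero_mul_exp_sq_of_nonpos ha le_rfl, hpos, integral_mul_exp_sq]
  simp

theorem integral_max_zero_mul_exp_sq_div_le {x r : ℝ} (hx : x < 0) (hr : 0 < r) :
    (∫ y in (x - r)..(x + r), max y 0 * exp (y ^ 2)) / ∫ y in (x - r)..(x + r), exp (y ^ 2)
      ≤ 1 / (-2 * x) := by
  rcases le_or_gt (x + r) 0 with hb | hb
  · rw [integral_max_zero_mul_exp_sq_of_nonpos (by linarith) hb, zero_div]
    exact div_nonneg zero_le_one (by linarith)
  -- on `[x - r, -r]`, `(x + r) ^ 2 < r ^ 2 ≤ y ^ 2`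
  have hden : -x * exp ((x + r) ^ 2) ≤ ∫ y in (x - r)..(x + r), exp (y ^ 2) :=
    calc -x * exp ((x + r) ^ 2) = (-r - (x - r)) * exp ((x + r) ^ 2) := by ring
      _ ≤ ∫ y in (x - r)..(-r), exp (y ^ 2) :=
        mul_exp_le_integral_exp_sq (by linarith) fun y hy => by nlinarith [hy.2]
      _ ≤ ∫ y in (x - r)..(x + r), exp (y ^ 2) :=
        intervalIntegral.integral_mono_interval le_rfl (by linarith) (by linarith)
          (ae_of_all _ fun y => (Real.exp_pos _).le)
          (by apply Continuous.intervalIntegrable; fun_prop)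
  calc (∫ y in (x - r)..(x + r), max y 0 * exp (y ^ 2)) / ∫ y in (x - r)..(x + r), exp (y ^ 2)
      ≤ (exp ((x + r) ^ 2) / 2) / (-x * exp ((x + r) ^ 2)) := by
        rw [integral_max_zero_mul_exp_sq (by linarith) hb.le]
        exact div_le_div₀ (by positivity) (by linarith)
          (mul_pos (by linarith) (Real.exp_pos _)) hden
    _ = 1 / (-2 * x) := by field_simp

theorem le_integral_max_zero_mul_exp_sq_div {x r : ℝ} (hx : 0 ≤ x) (hxr : x ≤ r)
    (hb : 1 ≤ x + r) :
    (x + r) / 8 ≤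
      (∫ y in (x - r)..(x + r), max y 0 * exp (y ^ 2)) / ∫ y in (x - r)..(x + r), exp (y ^ 2) := by
  set b := x + r
  have hexp : 2 ≤ exp (b ^ 2) := by nlinarith [Real.add_one_le_exp (b ^ 2)]
  have hden_pos : 0 < ∫ y in (x - r)..b, exp (y ^ 2) :=
    intervalIntegral.intervalIntegral_pos_of_pos_on
      (by apply Continuous.intervalIntegrable; fun_prop) (fun y _ => Real.exp_pos _) (by linarith)
  have hden : ∫ y in (x - r)..b, exp (y ^ 2) ≤ 2 * exp (b ^ 2) / b :=
    calc ∫ y in (x - r)..b, exp (y ^ 2) ≤ ∫ y in -b..b, exp (y ^ 2) :=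
          intervalIntegral.integral_mono_interval (by linarith) (by linarith) le_rfl
            (ae_of_all _ fun y => (Real.exp_pos _).le)
            (by apply Continuous.intervalIntegrable; fun_prop)
      _ ≤ 2 * exp (b ^ 2) / b := integral_exp_sq_symm_le (by linarith)
  calc b / 8 = (exp (b ^ 2) / 4) / (2 * exp (b ^ 2) / b) := by
        field_simp
        ring
    _ ≤ (∫ y in (x - r)..b, max y 0 * exp (y ^ 2)) / ∫ y in (x - r)..b, exp (y ^ 2) := by
        rw [integral_max_zero_mul_exp_sq (by linarith) (by linarith)]
        exact div_le_div₀ (by linarith) (by linarith) hden_pos hden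

theorem setLIntegral_withDensity_ofReal_Ioo {w g : ℝ → ℝ} (hw : Continuous w) (hw0 : ∀ y, 0 ≤ w y)
    (hg : Continuous g) (hg0 : ∀ y, 0 ≤ g y) {a b : ℝ} (hab : a ≤ b) :
    ∫⁻ y in Ioo a b, ENNReal.ofReal (g y) ∂volume.withDensity (fun y => ENNReal.ofReal (w y))
      = ENNReal.ofReal (∫ y in a..b, g y * w y) := by
  rw [setLIntegral_withDensity_eq_setLIntegral_mul _ (by fun_prop) (by fun_prop) measurableSet_Ioo,
    intervalIntegral.integral_of_le hab, integral_Ioc_eq_integral_Ioo,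
    ofReal_integral_eq_lintegral_ofReal
      ((by fun_prop : Continuous fun y => g y * w y).continuousOn.integrableOn_Icc.mono_set
        Ioo_subset_Icc_self)
      (ae_of_all _ fun y => mul_nonneg (hg0 y) (hw0 y))]
  refine setLIntegral_congr_fun measurableSet_Ioo fun y _ => ?_
  rw [Pi.mul_apply, ENNReal.ofReal_mul (hg0 y), mul_comm]

theorem withDensity_ofReal_Ioo {w : ℝ → ℝ} (hw : Continuous w) (hw0 : ∀ y, 0 ≤ w y) {a b : ℝ}
    (hab : a ≤ b) :
    volume.withDensity (fun y => ENNReal.ofReal (w y)) (Ioo a b)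
      = ENNReal.ofReal (∫ y in a..b, w y) := by
  simpa using setLIntegral_withDensity_ofReal_Ioo hw hw0 continuous_const
    (fun _ => zero_le_one) hab

theorem setLIntegral_div_withDensity_ball {w g : ℝ → ℝ} (hw : Continuous w) (hw0 : ∀ y, 0 < w y)
    (hg : Continuous g) (x : ℝ) {r : ℝ} (hr : 0 < r) :
    (∫⁻ y in ball x r, ENNReal.ofReal |g y| ∂volume.withDensity (fun y => ENNReal.ofReal (w y)))
        / volume.withDensity (fun y => ENNReal.ofReal (w y)) (ball x r)
      = ENNReal.ofReal ((∫ y in (x - r)..(x + r), |g y| * w y) / ∫ y in (x - r)..(x + r), w y) := by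
  have hab : x - r ≤ x + r := by linarith
  rw [Real.ball_eq_Ioo, setLIntegral_withDensity_ofReal_Ioo hw (fun y => (hw0 y).le) hg.abs
    (fun y => abs_nonneg _) hab, withDensity_ofReal_Ioo hw (fun y => (hw0 y).le) hab]
  exact (ENNReal.ofReal_div_of_pos (intervalIntegral.intervalIntegral_pos_of_pos_on
    (hw.intervalIntegrable _ _) (fun y _ => hw0 y) (by linarith))).symm

theorem locallyIntegrableBall_withDensity {w g : ℝ → ℝ} (hw : Continuous w) (hw0 : ∀ y, 0 ≤ w y)
    (hg : Continuous g) :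
    LocallyIntegrableBall (volume.withDensity fun y => ENNReal.ofReal (w y)) g := by
  intro c r hr
  rw [Real.ball_eq_Ioo, setLIntegral_withDensity_ofReal_Ioo hw hw0 hg.abs (fun y => abs_nonneg _)
    (by linarith)]
  exact ofReal_lt_top

noncomputable def expSqMeasure : Measure ℝ :=
  volume.withDensity fun x => ENNReal.ofReal (Real.exp (x ^ 2))

theorem volume_absolutelyContinuous_expSqMeasure : volume ≪ expSqMeasure :=
  withDensity_absolutelyContinuous' (by fun_prop) (ae_of_all _ fun y => by simp [Real.exp_pos])

theorem centeredMaximal_expSqMeasure_max_zero_le {x : ℝ} (hx : x < 0) :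
    centeredMaximal expSqMeasure (fun y => max y 0) x ≤ ENNReal.ofReal (1 / (-2 * x)) := by
  refine iSup₂_le fun r hr => ?_
  rw [expSqMeasure, setLIntegral_div_withDensity_ball (by fun_prop) (fun _ => Real.exp_pos _)
    (by fun_prop) x hr]
  simp only [le_sup_right, abs_of_nonneg]
  exact ENNReal.ofReal_le_ofReal (integral_max_zero_mul_exp_sq_div_le hx hr)

theorem centeredMaximal_expSqMeasure_max_zero_eq_top {x : ℝ} (hx : 0 ≤ x) :
    centeredMaximal expSqMeasure (fun y => max y 0) x = ⊤ := by
  refine ENNReal.eq_top_of_forall_nnreal_le fun n => ?_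
  have hr : (0 : ℝ) < x + 8 * n + 1 := by positivity
  refine le_iSup₂_of_le (x + 8 * (n : ℝ) + 1) hr ?_
  rw [expSqMeasure, setLIntegral_div_withDensity_ball (by fun_prop) (fun _ => Real.exp_pos _)
    (by fun_prop) x hr, ← ENNReal.ofReal_coe_nnreal]
  simp only [le_sup_right, abs_of_nonneg]
  refine ENNReal.ofReal_le_ofReal (le_trans ?_ (le_integral_max_zero_mul_exp_sq_div hx
    (by linarith [n.2]) (by linarith [n.2])))
  linarith [n.2]

/-- For `dμ = e^{x²} dx` on `ℝ` and `f(x) = x·χ_{(0,∞)}(x)`, the centered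
maximal function `M^c f` is finite at every `x < 0`; consequently the centered maximal
operator associated with `(ℝ, d_e, e^{x²}dx)` does not possess the dichotomy property. -/
theorem centeredMaximal_lt_top_of_neg_and_no_dichotomy (μ : Measure ℝ)
    (hμ : μ = volume.withDensity (fun x => ENNReal.ofReal (Real.exp (x ^ 2))))
    (f : ℝ → ℝ) (hf : f = fun x => if 0 < x then x else 0) :
    (∀ x : ℝ, x < 0 → centeredMaximal μ f x < ⊤) ∧
    ¬ (∀ g : ℝ → ℝ, LocallyIntegrableBall μ g →
        μ {x | centeredMaximal μ g x = ⊤} = 0 ∨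
          {x | centeredMaximal μ g x = ⊤} = Set.univ) := by
  have hμ' : μ = expSqMeasure := hμ
  have hf' : f = fun y => max y 0 := by
    rw [hf]
    ext y
    split_ifs with hy
    exacts [(max_eq_left hy.le).symm, (max_eq_right (not_lt.1 hy)).symm]
  subst hμ' hf'
  have hfinite (x : ℝ) (hx : x < 0) : centeredMaximal expSqMeasure (fun y => max y 0) x < ⊤ :=
    (centeredMaximal_expSqMeasure_max_zero_le hx).trans_lt ofReal_lt_top
  refine ⟨hfinite, fun hdichotomy => ?_⟩
  rcases hdichotomy _ (locallyIntegrableBall_withDensity (w := fun y => Real.exp (y ^ 2))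
    (g := fun y => max y 0) (by fun_prop)
    (fun _ => (Real.exp_pos _).le) (by fun_prop)) with hnull | huniv
  · have hsub : Ici 0 ⊆ {x | centeredMaximal expSqMeasure (fun y => max y 0) x = ⊤} :=
      fun x hx => centeredMaximal_expSqMeasure_max_zero_eq_top hx
    simpa using volume_absolutelyContinuous_expSqMeasure (measure_mono_null hsub hnull)
  · exact (hfinite (-1) (by norm_num)).ne (eq_univ_iff_forall.1 huniv (-1))
end

section
/- Consider ℤ² with the supremum metric d_∞ and the measure μ defined on points by μ(n,m) = 4^{|m|} if n = 0 and μ(n,m) = 1 otherwise. Then lim_{r→∞} μ(B_{r+1}(0,0))/μ(B_r(0,0)) = 4, where B_r(0,0) = {(n,m) ∈ ℤ² : max(|n|,|m|) < r}. -/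
open MeasureTheory Metric Filter Set ENNReal

/-!
The ball `B_r(0,0)` is the box of lattice points with `max(|n|, |m|) < ⌈r⌉`, so passing from `r`
to `r + 1` adds one layer to the box. In the box of half-width `N` the column `n = 0` has mass
`∑_{|m| ≤ N} 4^|m| = (2·4^(N+1) - 5)/3`, while all other points together weigh only `2N(2N+1)`.
So the mass of the box is `(2/3 + o(1)) · 4^(N+1)`, and consecutive ratios tend to `4`.
-/

namespace BallRatio

open Finset Topology

lemma sum_Icc_neg_natAbs_add {M : Type*} [AddCommMonoid M] (f : ℕ → M) (N : ℕ) :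
    ∑ m ∈ Finset.Icc (-(N : ℤ)) N, f m.natAbs + f 0 = 2 • ∑ k ∈ range (N + 1), f k := by
  induction N with
  | zero => simp [two_nsmul]
  | succ N ih =>
    have hIcc : Finset.Icc (-((N + 1 : ℕ) : ℤ)) (N + 1 : ℕ) =
        insert (-((N : ℤ) + 1)) (insert ((N : ℤ) + 1) (Finset.Icc (-(N : ℤ)) N)) := by
      ext m; simp only [Finset.mem_insert, Finset.mem_Icc]; omega
    rw [hIcc, sum_insert (by simp; omega), sum_insert (by simp), sum_range_succ, smul_add, ← ih]
    simp only [Int.natAbs_neg]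
    rw [show ((N : ℤ) + 1).natAbs = N + 1 by omega, two_nsmul]
    abel

lemma tendsto_succ_div_of_tendsto_div_pow {𝕜 : Type*} [NormedField 𝕜] {u : ℕ → 𝕜} {c κ : 𝕜}
    (hc : c ≠ 0) (hκ : κ ≠ 0) (hu : Tendsto (fun n => u n / c ^ n) atTop (𝓝 κ)) :
    Tendsto (fun n => u (n + 1) / u n) atTop (𝓝 c) := by
  have hlim := ((tendsto_add_atTop_iff_nat 1).2 hu).const_mul c |>.div hu hκ
  rw [mul_div_cancel_right₀ c hκ] at hlim
  refine hlim.congr fun n => ?_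
  have hcn : c ^ n ≠ 0 := pow_ne_zero n hc
  simp only [Pi.div_apply, pow_succ]
  field_simp

lemma withDensity_count_finset {α : Type*} [MeasurableSpace α] [MeasurableSingletonClass α]
    (f : α → ℝ≥0∞) (s : Finset α) : Measure.count.withDensity f s = ∑ x ∈ s, f x := by
  simp [withDensity_apply _ s.measurableSet, lintegral_finset]

def weight (p : ℤ × ℤ) : ℕ := if p.1 = 0 then 4 ^ p.2.natAbs else 1

noncomputable def box (N : ℕ) : Finset (ℤ × ℤ) := Finset.Ioo (-(N : ℤ)) N ×ˢ Finset.Ioo (-(N : ℤ)) N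

noncomputable def boxMass (N : ℕ) : ℕ := ∑ p ∈ box N, weight p

lemma natCast_weight (p : ℤ × ℤ) :
    (weight p : ℝ≥0∞) = if p.1 = 0 then (4 : ℝ≥0∞) ^ p.2.natAbs else 1 := by
  unfold weight; split_ifs <;> push_cast <;> rfl

lemma ball_zero_eq_box (r : ℝ) : ball ((0, 0) : ℤ × ℤ) r = box ⌈r⌉₊ := by
  have habs (a : ℤ) : |(a : ℝ)| < r ↔ -(⌈r⌉₊ : ℤ) < a ∧ a < ⌈r⌉₊ := by
    rw [← Int.cast_abs, ← Int.natCast_natAbs, Int.cast_natCast, ← Nat.lt_ceil]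
    omega
  ext p
  simp only [box, coe_product, mem_prod, Finset.mem_coe, Finset.mem_Ioo, mem_ball, Prod.dist_eq,
    Int.dist_eq, Int.cast_zero, sub_zero, max_lt_iff, habs]

lemma sum_weight_product (I : Finset ℤ) (h0 : 0 ∈ I) :
    ∑ p ∈ I ×ˢ I, weight p = ∑ m ∈ I, 4 ^ m.natAbs + (#I - 1) * #I := by
  have hrow (n : ℤ) (hn : n ∈ I.erase 0) : ∑ m ∈ I, weight (n, m) = #I := by
    simp [weight, ne_of_mem_erase hn]
  rw [sum_product, ← add_sum_erase _ _ h0, sum_congr rfl hrow]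
  simp [weight, card_erase_of_mem h0]

lemma boxMass_succ (N : ℕ) :
    (boxMass (N + 1) : ℝ) = (2 * 4 ^ (N + 1) - 5) / 3 + 2 * N * (2 * N + 1) := by
  have hIoo : Finset.Ioo (-((N + 1 : ℕ) : ℤ)) (N + 1 : ℕ) = Finset.Icc (-(N : ℤ)) N := by
    ext m; simp only [Finset.mem_Ioo, Finset.mem_Icc]; omega
  have hcol := sum_Icc_neg_natAbs_add (fun k => (4 : ℝ) ^ k) N
  rw [geom_sum_eq (by norm_num)] at hcol
  have hcard : #(Finset.Icc (-(N : ℤ)) N) = 2 * N + 1 := by rw [Int.card_Icc]; omega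
  rw [boxMass, box, hIoo, sum_weight_product _ (by simp), hcard]
  push_cast
  simp only [pow_zero, nsmul_eq_mul, Nat.cast_ofNat] at hcol
  linarith

lemma tendsto_boxMass_div_four_pow :
    Tendsto (fun N => (boxMass N : ℝ) / 4 ^ N) atTop (𝓝 (2 / 3)) := by
  rw [← tendsto_add_atTop_iff_nat 1]
  -- `boxMass (N + 1) / 4 ^ (N + 1) = 2/3 - (5/12) / 4^N + (1/2) N / 4^N + N^2 / 4^N`
  have h0 := tendsto_pow_const_div_const_pow_of_one_lt 0 (by norm_num : (1 : ℝ) < 4)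
  have h1 := tendsto_pow_const_div_const_pow_of_one_lt 1 (by norm_num : (1 : ℝ) < 4)
  have h2 := tendsto_pow_const_div_const_pow_of_one_lt 2 (by norm_num : (1 : ℝ) < 4)
  have hlim := ((h0.const_mul (-5 / 12)).add ((h1.const_mul (1 / 2)).add h2)).const_add (2 / 3)
  norm_num at hlim
  refine hlim.congr fun N => ?_
  rw [boxMass_succ]
  field_simp
  ring

lemma tendsto_boxMass_succ_div :
    Tendsto (fun N => (boxMass (N + 1) : ℝ≥0∞) / boxMass N) atTop (𝓝 4) := by
  have hpos : ∀ᶠ N in atTop, (0 : ℝ) < boxMass N :=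
    (tendsto_boxMass_div_four_pow.eventually (lt_mem_nhds (by norm_num : (0 : ℝ) < 2 / 3))).mono
      fun N hN => (div_pos_iff_of_pos_right (by positivity)).1 hN
  have hratio := ENNReal.tendsto_ofReal <| tendsto_succ_div_of_tendsto_div_pow
    (by norm_num) (by norm_num) tendsto_boxMass_div_four_pow
  rw [ENNReal.ofReal_ofNat] at hratio
  refine hratio.congr' ?_
  filter_upwards [hpos] with N hN
  rw [ENNReal.ofReal_div_of_pos hN, ofReal_natCast, ofReal_natCast]

end BallRatio

open BallRatio in
/-- On `ℤ²` with the supremum metric and measure with point weights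
`μ(n,m) = 4^{|m|}` if `n = 0` and `1` otherwise, one has
`lim_{r→∞} μ(B_{r+1}(0,0))/μ(B_r(0,0)) = 4`. -/
theorem ball_ratio_tendsto_four (μ : Measure (ℤ × ℤ))
    (hμ : μ = Measure.count.withDensity
      (fun p : ℤ × ℤ => if p.1 = 0 then (4 : ℝ≥0∞) ^ p.2.natAbs else 1)) :
    Filter.Tendsto
      (fun r : ℝ => μ (Metric.ball ((0, 0) : ℤ × ℤ) (r + 1)) /
        μ (Metric.ball ((0, 0) : ℤ × ℤ) r))
      Filter.atTop (nhds 4) := by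
  have hball (r : ℝ) : μ (ball (0, 0) r) = boxMass ⌈r⌉₊ := by
    simp_rw [hμ, ← natCast_weight, ball_zero_eq_box, withDensity_count_finset, boxMass, Nat.cast_sum]
  refine (tendsto_boxMass_succ_div.comp tendsto_nat_ceil_atTop).congr' ?_
  filter_upwards [eventually_ge_atTop 0] with r hr
  simp [hball, Nat.ceil_add_one hr]
end

section
/- Consider ℤ² with the supremum metric d_∞ and the measure μ with μ(n,m) = 4^{|m|} if n = 0 and μ(n,m) = 1 otherwise. Let f(n,m) = 2^n if n > 0 and m = 0, and f(n,m) = 0 otherwise. Then the non-centered maximal function satisfies Mf(1,0) = ∞. -/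
open MeasureTheory Metric Filter Set ENNReal

lemma le_noncenteredMaximal {X : Type*} [MeasurableSpace X] [PseudoMetricSpace X]
    (μ : Measure X) (f : X → ℝ) {x c : X} {r : ℝ} (hr : 0 < r) (hx : x ∈ ball c r) :
    (∫⁻ y in ball c r, ENNReal.ofReal |f y| ∂μ) / μ (ball c r) ≤
      noncenteredMaximal μ f x :=
  le_iSup₂_of_le c r <| le_iSup₂_of_le (α := ℝ≥0∞) hr hx le_rfl

lemma withDensity_apply_of_eqOn_one {α : Type*} [MeasurableSpace α] (μ : Measure α)
    {w : α → ℝ≥0∞} {s : Set α} (hs : MeasurableSet s) (hw : EqOn w 1 s) :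
    μ.withDensity w s = μ s := by
  rw [withDensity_apply _ hs, setLIntegral_congr_fun hs hw, Pi.one_def, setLIntegral_one]

lemma mul_measure_singleton_le_setLIntegral {α : Type*} [MeasurableSpace α]
    [MeasurableSingletonClass α] (μ : Measure α) (g : α → ℝ≥0∞) {s : Set α} {a : α}
    (ha : a ∈ s) : g a * μ {a} ≤ ∫⁻ y in s, g y ∂μ := by
  rw [← lintegral_singleton]
  exact lintegral_mono_set (singleton_subset_iff.2 ha)

lemma Int.ball_natCast_add_one (c : ℤ) (k : ℕ) : ball c (k + 1) = Icc (c - k) (c + k) := by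
  rw [Int.ball_eq_Ioo]
  have h₁ : ⌊(c : ℝ) - (k + 1)⌋ = c - k - 1 := by
    rw [Int.floor_eq_iff]; push_cast; constructor <;> linarith
  have h₂ : ⌈(c : ℝ) + (k + 1)⌉ = c + k + 1 := by
    rw [Int.ceil_eq_iff]; push_cast; constructor <;> linarith
  ext n
  simp only [h₁, h₂, mem_Ioo, mem_Icc]
  omega

lemma two_mul_add_one_sq_le_two_pow {k : ℕ} (hk : 9 ≤ k) : (2 * k + 1) ^ 2 ≤ 2 ^ k := by
  induction k, hk using Nat.le_induction with
  | base => norm_num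
  | succ n _ ih =>
    calc (2 * (n + 1) + 1) ^ 2 ≤ 2 * (2 * n + 1) ^ 2 := by nlinarith
      _ ≤ 2 ^ (n + 1) := by rw [pow_succ 2 n]; omega

noncomputable def columnWeight (p : ℤ × ℤ) : ℝ≥0∞ :=
  if p.1 = 0 then 4 ^ p.2.natAbs else 1

noncomputable def columnMeasure : Measure (ℤ × ℤ) := Measure.count.withDensity columnWeight

def axisPowTwo (p : ℤ × ℤ) : ℝ := if 0 < p.1 ∧ p.2 = 0 then 2 ^ p.1.toNat else 0

def shiftedBall (k : ℕ) : Set (ℤ × ℤ) := ball ((k + 1 : ℤ), 0) (k + 1)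

lemma shiftedBall_eq (k : ℕ) :
    shiftedBall k = Icc (1 : ℤ) (2 * k + 1) ×ˢ Icc (-k : ℤ) k := by
  rw [shiftedBall, ← ball_prod_same, Int.ball_natCast_add_one, Int.ball_natCast_add_one]
  congr 2 <;> ring

lemma columnWeight_eqOn_shiftedBall (k : ℕ) : EqOn columnWeight 1 (shiftedBall k) := by
  intro p hp
  rw [shiftedBall_eq, mem_prod, mem_Icc] at hp
  exact if_neg (by omega)

lemma columnMeasure_shiftedBall (k : ℕ) : columnMeasure (shiftedBall k) = (2 * k + 1) ^ 2 := by
  rw [columnMeasure, withDensity_apply_of_eqOn_one _ (to_countable _).measurableSet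
    (columnWeight_eqOn_shiftedBall k), shiftedBall_eq, ← Finset.coe_Icc, ← Finset.coe_Icc,
    ← Finset.coe_product, Measure.count_apply_finset, Finset.card_product, Int.card_Icc,
    Int.card_Icc, show (2 * (k : ℤ) + 1 + 1 - 1).toNat = 2 * k + 1 by omega,
    show ((k : ℤ) + 1 - -k).toNat = 2 * k + 1 by omega, sq]
  push_cast
  rfl

lemma two_pow_le_setLIntegral_shiftedBall (k : ℕ) :
    (2 : ℝ≥0∞) ^ (2 * k + 1) ≤
      ∫⁻ y in shiftedBall k, ENNReal.ofReal |axisPowTwo y| ∂columnMeasure := by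
  have hp : ((2 * k + 1 : ℤ), (0 : ℤ)) ∈ shiftedBall k := by
    rw [shiftedBall_eq, mem_prod, mem_Icc, mem_Icc]
    omega
  have hμp : columnMeasure {((2 * k + 1 : ℤ), (0 : ℤ))} = 1 := by
    rw [columnMeasure, withDensity_apply_of_eqOn_one _ (measurableSet_singleton _)
      (fun _ hq => columnWeight_eqOn_shiftedBall k (mem_singleton_iff.1 hq ▸ hp)),
      Measure.count_singleton]
  have hfp : axisPowTwo ((2 * k + 1 : ℤ), (0 : ℤ)) = 2 ^ (2 * k + 1) := by
    rw [axisPowTwo, if_pos ⟨by omega, rfl⟩, show (2 * (k : ℤ) + 1).toNat = 2 * k + 1 by omega]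
  calc (2 : ℝ≥0∞) ^ (2 * k + 1)
      = ENNReal.ofReal |axisPowTwo ((2 * k + 1 : ℤ), (0 : ℤ))| *
          columnMeasure {((2 * k + 1 : ℤ), (0 : ℤ))} := by
        rw [hμp, mul_one, hfp, abs_of_nonneg (by positivity), ENNReal.ofReal_pow zero_le_two,
          ENNReal.ofReal_ofNat]
    _ ≤ _ := mul_measure_singleton_le_setLIntegral _ _ hp

lemma two_pow_le_average_shiftedBall {k : ℕ} (hk : 9 ≤ k) :
    (2 : ℝ≥0∞) ^ k ≤
      (∫⁻ y in shiftedBall k, ENNReal.ofReal |axisPowTwo y| ∂columnMeasure) /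
      columnMeasure (shiftedBall k) := by
  have hsq : (2 * (k : ℝ≥0∞) + 1) ^ 2 ≤ 2 ^ k := by
    exact_mod_cast two_mul_add_one_sq_le_two_pow hk
  rw [columnMeasure_shiftedBall, ENNReal.le_div_iff_mul_le (by simp)
    (Or.inl (by simp [ENNReal.mul_eq_top]))]
  calc (2 : ℝ≥0∞) ^ k * (2 * k + 1) ^ 2 ≤ 2 ^ k * 2 ^ k := by gcongr
    _ ≤ 2 ^ (2 * k + 1) := by rw [← pow_add]; exact pow_le_pow_right₀ one_le_two (by omega)
    _ ≤ _ := two_pow_le_setLIntegral_shiftedBall k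

/-- On `ℤ²` with the supremum metric and measure with point weights
`μ(n,m) = 4^{|m|}` if `n = 0` and `1` otherwise, for `f(n,m) = 2^n` if `n > 0, m = 0`
and `0` otherwise, the non-centered maximal function satisfies `Mf(1,0) = ∞`. -/
theorem noncenteredMaximal_eq_top_at_one (μ : Measure (ℤ × ℤ))
    (hμ : μ = Measure.count.withDensity
      (fun p : ℤ × ℤ => if p.1 = 0 then (4 : ℝ≥0∞) ^ p.2.natAbs else 1))
    (f : ℤ × ℤ → ℝ)
    (hf : f = fun p : ℤ × ℤ => if 0 < p.1 ∧ p.2 = 0 then (2 : ℝ) ^ p.1.toNat else 0) :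
    noncenteredMaximal μ f ((1, 0) : ℤ × ℤ) = ⊤ := by
  subst hμ hf
  refine top_le_iff.1 <| le_of_tendsto (ENNReal.tendsto_pow_atTop_nhds_top_iff.2 one_lt_two) ?_
  filter_upwards [eventually_ge_atTop 9] with k hk
  have hx : ((1, 0) : ℤ × ℤ) ∈ shiftedBall k := by
    rw [shiftedBall_eq, mem_prod, mem_Icc, mem_Icc]
    omega
  exact (two_pow_le_average_shiftedBall hk).trans
    (le_noncenteredMaximal columnMeasure axisPowTwo (by positivity) hx)
end

section
/- Consider ℤ² with the supremum metric d_∞ and the measure μ with μ(n,m) = 4^{|m|} if n = 0 and μ(n,m) = 1 otherwise. Let f(n,m) = 2^n if n > 0 and m = 0, and f(n,m) = 0 otherwise. Then the non-centered maximal function satisfies Mf(−1,0) < ∞. Consequently, the non-centered maximal operator M associated with this space does not possess the dichotomy property. -/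
open MeasureTheory Metric Filter Set ENNReal

/-!
Weights `4^|m|` on the column `n = 0` make every ball that contains `(-1, 0)` and meets the ray
`{(n, 0) : n > 0}` heavy: such a ball of radius `r` contains a column point `(0, m)` with
`|m| ≥ ⌈r⌉ - 1`, whose weight `4^(⌈r⌉ - 1)` dominates the geometric sum of `f` over the ball, so
`Mf(-1, 0) ≤ 1`. Balls containing `(1, 0)` can avoid the column: the square
`[1, 2N + 1] × [-N, N]` has measure `(2N + 1)^2` and contains `(2N + 1, 0)`, where `f = 2^(2N+1)`,
so `Mf(1, 0) = ∞`. As `(1, 0)` has positive measure, the set `{Mf = ∞}` is neither null nor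
everything.
-/

section Maximal

variable {X : Type*} [MeasurableSpace X] [PseudoMetricSpace X] {μ : Measure X} {f : X → ℝ}
  {x : X}

lemma setLIntegral_ball_div_le_noncenteredMaximal {c : X} {r : ℝ} (hr : 0 < r)
    (hx : x ∈ ball c r) :
    (∫⁻ y in ball c r, ENNReal.ofReal |f y| ∂μ) / μ (ball c r) ≤ noncenteredMaximal μ f x :=
  le_iSup₂_of_le c r <| le_iSup₂_of_le hr hx le_rfl

lemma noncenteredMaximal_le {C : ℝ≥0∞}
    (h : ∀ c r, 0 < r → x ∈ ball c r →
      ∫⁻ y in ball c r, ENNReal.ofReal |f y| ∂μ ≤ C * μ (ball c r)) :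
    noncenteredMaximal μ f x ≤ C :=
  iSup₂_le fun c r => iSup₂_le fun hr hx => ENNReal.div_le_of_le_mul (h c r hr hx)

end Maximal

section WithDensityCount

variable {α : Type*} [MeasurableSpace α] [MeasurableSingletonClass α] (w : α → ℝ≥0∞)

lemma withDensity_count_singleton (a : α) : Measure.count.withDensity w {a} = w a := by
  simp [withDensity_apply _ (measurableSet_singleton a)]

lemma le_withDensity_count_of_mem {s : Set α} {a : α} (ha : a ∈ s) :
    w a ≤ Measure.count.withDensity w s :=
  withDensity_count_singleton w a ▸ measure_mono (singleton_subset_iff.2 ha)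

lemma withDensity_count_finset (s : Finset α) :
    Measure.count.withDensity w s = ∑ a ∈ s, w a := by
  simp [← sum_measure_singleton]

lemma setLIntegral_withDensity_count_finset (F : α → ℝ≥0∞) (s : Finset α) :
    ∫⁻ a in s, F a ∂Measure.count.withDensity w = ∑ a ∈ s, F a * w a := by
  simp [lintegral_finset]

end WithDensityCount

lemma Int.ball_prod_eq_coe_Ioo_product (a b : ℤ) (r : ℝ) :
    ball (a, b) r = ↑(Finset.Ioo (a - ⌈r⌉) (a + ⌈r⌉) ×ˢ Finset.Ioo (b - ⌈r⌉) (b + ⌈r⌉)) := by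
  rw [← ball_prod_same, Int.ball_eq_Ioo, Int.ball_eq_Ioo, Finset.coe_product, Finset.coe_Ioo,
    Finset.coe_Ioo, sub_eq_add_neg, sub_eq_add_neg, Int.floor_intCast_add, Int.floor_intCast_add,
    Int.floor_neg, Int.ceil_intCast_add, Int.ceil_intCast_add]
  rfl

lemma locallyIntegrableBall_withDensity_count {w : ℤ × ℤ → ℝ≥0∞} (hw : ∀ p, w p ≠ ⊤)
    (g : ℤ × ℤ → ℝ) : LocallyIntegrableBall (Measure.count.withDensity w) g := by
  rintro ⟨a, b⟩ r -
  rw [Int.ball_prod_eq_coe_Ioo_product, setLIntegral_withDensity_count_finset]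
  exact ENNReal.sum_lt_top.2 fun p _ => ENNReal.mul_lt_top ofReal_lt_top (hw p).lt_top

lemma odd_sq_le_two_pow {N : ℕ} (hN : 7 ≤ N) : (2 * N + 1) ^ 2 ≤ 2 ^ (N + 1) := by
  induction N, hN using Nat.le_induction with
  | base => norm_num
  | succ N hN ih =>
    calc (2 * (N + 1) + 1) ^ 2 ≤ 2 * (2 * N + 1) ^ 2 := by nlinarith
      _ ≤ 2 ^ (N + 1 + 1) := by rw [pow_succ 2 (N + 1)]; omega

noncomputable def weight (p : ℤ × ℤ) : ℝ≥0∞ := if p.1 = 0 then 4 ^ p.2.natAbs else 1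

noncomputable def dyadicRay (p : ℤ × ℤ) : ℝ := if 0 < p.1 ∧ p.2 = 0 then 2 ^ p.1.toNat else 0

local notation "μ₀" => Measure.count.withDensity weight

lemma weight_ne_top (p : ℤ × ℤ) : weight p ≠ ⊤ := by
  unfold weight; split_ifs <;> simp

lemma ofReal_abs_dyadicRay (p : ℤ × ℤ) :
    ENNReal.ofReal |dyadicRay p| = if 0 < p.1 ∧ p.2 = 0 then 2 ^ p.1.toNat else 0 := by
  unfold dyadicRay; split_ifs <;> simp [abs_of_pos, ENNReal.ofReal_pow]

lemma ofReal_abs_dyadicRay_mul_weight (p : ℤ × ℤ) :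
    ENNReal.ofReal |dyadicRay p| * weight p = ENNReal.ofReal |dyadicRay p| := by
  rw [ofReal_abs_dyadicRay, weight]
  split_ifs <;> simp_all

lemma sum_ofReal_abs_dyadicRay_le (s : Finset (ℤ × ℤ)) (K : ℕ)
    (hs : ∀ p ∈ s, 0 < p.1 → p.2 = 0 → p.1 < K) :
    ∑ p ∈ s, ENNReal.ofReal |dyadicRay p| ≤ 2 ^ K := by
  calc ∑ p ∈ s, ENNReal.ofReal |dyadicRay p|
      ≤ ∑ p ∈ (Finset.range K).image fun k : ℕ => ((k : ℤ), (0 : ℤ)),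
          ENNReal.ofReal |dyadicRay p| := by
        refine Finset.sum_le_sum_of_ne_zero fun p hp hne => ?_
        rw [ofReal_abs_dyadicRay] at hne
        obtain ⟨hp1, hp2⟩ : 0 < p.1 ∧ p.2 = 0 := by by_contra h; simp [h] at hne
        have := hs p hp hp1 hp2
        simp only [Finset.mem_image, Finset.mem_range, Prod.ext_iff]
        exact ⟨p.1.toNat, by omega, by omega, hp2.symm⟩
    _ = ∑ k ∈ Finset.range K, ENNReal.ofReal |dyadicRay ((k : ℤ), 0)| :=
        Finset.sum_image fun _ _ _ _ h => by simpa using h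
    _ ≤ ∑ k ∈ Finset.range K, (2 : ℝ≥0∞) ^ k := by
        refine Finset.sum_le_sum fun k _ => ?_
        rw [ofReal_abs_dyadicRay]
        split_ifs <;> simp
    _ ≤ 2 ^ K := by exact_mod_cast (Nat.geomSum_lt le_rfl fun k hk => Finset.mem_range.1 hk).le

lemma setLIntegral_dyadicRay_le_measure_ball {c : ℤ × ℤ} {r : ℝ}
    (hc : ((-1, 0) : ℤ × ℤ) ∈ ball c r) :
    ∫⁻ p in ball c r, ENNReal.ofReal |dyadicRay p| ∂μ₀ ≤ μ₀ (ball c r) := by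
  obtain ⟨a, b⟩ := c
  rw [Int.ball_prod_eq_coe_Ioo_product] at hc ⊢
  have hbounds : (a - ⌈r⌉ < -1 ∧ -1 < a + ⌈r⌉) ∧ b - ⌈r⌉ < 0 ∧ 0 < b + ⌈r⌉ := by simpa using hc
  rw [setLIntegral_withDensity_count_finset]
  simp only [ofReal_abs_dyadicRay_mul_weight]
  by_cases h : a + ⌈r⌉ ≤ 1
  · calc _ ≤ 2 ^ 0 := sum_ofReal_abs_dyadicRay_le _ 0 fun p hp h1 _ => by
            simp only [Finset.mem_product, Finset.mem_Ioo] at hp; omega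
      _ = weight (-1, 0) := by simp [weight]
      _ ≤ _ := le_withDensity_count_of_mem weight hc
  · obtain ⟨m, hm, hmr⟩ : ∃ m, (b - ⌈r⌉ < m ∧ m < b + ⌈r⌉) ∧ (⌈r⌉ - 1).toNat ≤ m.natAbs := by
      rcases le_or_gt 0 b with hb | hb
      · exact ⟨b + ⌈r⌉ - 1, by omega, by omega⟩
      · exact ⟨b - ⌈r⌉ + 1, by omega, by omega⟩
    -- ray points of the ball satisfy `n < a + ⌈r⌉ ≤ 2 (⌈r⌉ - 1)`, as `a < ⌈r⌉ - 1`
    calc _ ≤ 2 ^ (2 * (⌈r⌉ - 1).toNat) := sum_ofReal_abs_dyadicRay_le _ _ fun p hp h1 _ => by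
            simp only [Finset.mem_product, Finset.mem_Ioo] at hp; omega
      _ = 4 ^ (⌈r⌉ - 1).toNat := by rw [pow_mul]; norm_num
      _ ≤ 4 ^ m.natAbs := pow_le_pow_right₀ (by norm_num) hmr
      _ = weight (0, m) := by simp [weight]
      _ ≤ _ := le_withDensity_count_of_mem weight (by simp; omega)

lemma two_pow_le_noncenteredMaximal {N : ℕ} (hN : 7 ≤ N) :
    2 ^ N ≤ noncenteredMaximal μ₀ dyadicRay (1, 0) := by
  set s := Finset.Ioo (0 : ℤ) (2 * N + 2) ×ˢ Finset.Ioo (-(N + 1) : ℤ) (N + 1)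
  have hball : ball ((N + 1 : ℤ), (0 : ℤ)) ((N + 1 : ℤ) : ℝ) = ↑s := by
    rw [Int.ball_prod_eq_coe_Ioo_product, Int.ceil_intCast]
    congr 3 <;> ring
  have hx : ((1, 0) : ℤ × ℤ) ∈ ball ((N + 1 : ℤ), (0 : ℤ)) ((N + 1 : ℤ) : ℝ) := by
    rw [hball]; simp [s]; omega
  have hμ : μ₀ s = ((2 * N + 1) ^ 2 : ℕ) := by
    rw [withDensity_count_finset, Finset.sum_congr rfl fun p hp => (?_ : weight p = 1)]
    · rw [Finset.sum_const, nsmul_one, Finset.card_product, Int.card_Ioo, Int.card_Ioo, sq]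
      congr 2 <;> omega
    · simp only [s, Finset.mem_product, Finset.mem_Ioo] at hp
      simp only [weight, ite_eq_right_iff]
      omega
  have hmem : ((2 * N + 1 : ℤ), (0 : ℤ)) ∈ s := by simp [s]; omega
  refine le_trans ?_ (setLIntegral_ball_div_le_noncenteredMaximal (by positivity) hx)
  rw [hball, setLIntegral_withDensity_count_finset, hμ,
    ENNReal.le_div_iff_mul_le (Or.inl (Nat.cast_ne_zero.2 (by positivity)))
    (Or.inl (natCast_ne_top _))]
  calc (2 : ℝ≥0∞) ^ N * ((2 * N + 1) ^ 2 : ℕ) ≤ 2 ^ N * 2 ^ (N + 1) := by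
        gcongr; exact_mod_cast odd_sq_le_two_pow hN
    _ = ENNReal.ofReal |dyadicRay ((2 * N + 1 : ℤ), 0)| * weight ((2 * N + 1 : ℤ), 0) := by
        rw [ofReal_abs_dyadicRay_mul_weight, ofReal_abs_dyadicRay, if_pos (by omega), ← pow_add]
        congr 1; omega
    _ ≤ _ := Finset.single_le_sum (f := fun p => ENNReal.ofReal |dyadicRay p| * weight p)
        (fun p _ => zero_le) hmem

/-- On `ℤ²` with the supremum metric and measure with point weights
`μ(n,m) = 4^{|m|}` if `n = 0` and `1` otherwise, for `f(n,m) = 2^n` if `n > 0, m = 0`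
and `0` otherwise, the non-centered maximal function satisfies `Mf(−1,0) < ∞`;
consequently the non-centered maximal operator does not possess the dichotomy property. -/
theorem noncenteredMaximal_lt_top_and_no_dichotomy (μ : Measure (ℤ × ℤ))
    (hμ : μ = Measure.count.withDensity
      (fun p : ℤ × ℤ => if p.1 = 0 then (4 : ℝ≥0∞) ^ p.2.natAbs else 1))
    (f : ℤ × ℤ → ℝ)
    (hf : f = fun p : ℤ × ℤ => if 0 < p.1 ∧ p.2 = 0 then (2 : ℝ) ^ p.1.toNat else 0) :
    noncenteredMaximal μ f ((-1, 0) : ℤ × ℤ) < ⊤ ∧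
    ¬ (∀ g : ℤ × ℤ → ℝ, LocallyIntegrableBall μ g →
        μ {x | noncenteredMaximal μ g x = ⊤} = 0 ∨
          {x | noncenteredMaximal μ g x = ⊤} = Set.univ) := by
  obtain rfl : μ = μ₀ := hμ
  obtain rfl : f = dyadicRay := hf
  have hfinite : noncenteredMaximal μ₀ dyadicRay (-1, 0) < ⊤ :=
    (noncenteredMaximal_le (C := 1) fun _ _ _ hc => by
      rw [one_mul]; exact setLIntegral_dyadicRay_le_measure_ball hc).trans_lt one_lt_top
  have hinfinite : noncenteredMaximal μ₀ dyadicRay (1, 0) = ⊤ :=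
    top_le_iff.1 <| le_of_tendsto (ENNReal.tendsto_pow_atTop_nhds_top_iff.2 one_lt_two)
      (eventually_atTop.2 ⟨7, fun _ hN => two_pow_le_noncenteredMaximal hN⟩)
  refine ⟨hfinite, fun hdichotomy => ?_⟩
  rcases hdichotomy dyadicRay (locallyIntegrableBall_withDensity_count weight_ne_top _) with
    hnull | huniv
  · have := le_withDensity_count_of_mem weight
      (show ((1, 0) : ℤ × ℤ) ∈ {x | noncenteredMaximal μ₀ dyadicRay x = ⊤} from hinfinite)
    simp [hnull, weight] at this
  · exact hfinite.ne (Set.eq_univ_iff_forall.1 huniv (-1, 0))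
end
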